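/- arXiv:2409.04201 — 16 statements merged into one kernel-verified Lean document; each statement's English description precedes it below -/
import Mathlib

section
/- The evaluation map ev_P : V → F_q^n is injective. Consequently, the code C = im(ev_P) has F_q-dimension exactly (b−1)·r. -/
/-- The evaluation map sending a tuple `a : Fin r → F[x]` (representing the polynomial
`f(x,y) = ∑ ℓ, a ℓ (x) * y ^ ℓ`) to its values at the points `(x i, y i j)`. -/
noncomputable def evalMap (F : Type*) [Field F] (b r : ℕ) (x : Fin b → F)
    (y : Fin b → Fin (r + 1) → F) :
    (Fin r → Polynomial F) →ₗ[F] (Fin b × Fin (r + 1) → F) where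
  toFun a := fun p => ∑ ℓ : Fin r, (a ℓ).eval (x p.1) * y p.1 p.2 ^ (ℓ : ℕ)
  map_add' u v := by
    funext p
    simp [Pi.add_apply, Polynomial.eval_add, add_mul, Finset.sum_add_distrib]
  map_smul' c u := by
    funext p
    simp [Pi.smul_apply, Polynomial.eval_smul, smul_eq_mul, Finset.mul_sum, mul_assoc]

/-- The space `V` of polynomials `f(x,y) = ∑_{ℓ=0}^{r-1} a_ℓ(x) y^ℓ` with
`deg a_ℓ ≤ b - 2`, represented by the tuple of coefficients `(a_0, …, a_{r-1})`. -/
noncomputable def Vspace (F : Type*) [Field F] (b r : ℕ) :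
    Submodule F (Fin r → Polynomial F) :=
  Submodule.pi Set.univ fun _ : Fin r => Polynomial.degreeLE F ((b - 2 : ℕ) : WithBot ℕ)

open Polynomial

/-- Vanishing of a low-degree polynomial at many points. -/
lemma coeffs_eq_zero_of_eval {F : Type*} [Field F] {m : ℕ} (c : Fin m → F)
    {ι : Type*} [Fintype ι] (t : ι → F) (ht : Function.Injective t)
    (hcard : m < Fintype.card ι)
    (h : ∀ i, ∑ ℓ : Fin m, c ℓ * t i ^ (ℓ : ℕ) = 0) : c = 0 := by
  set q : degreeLT F m := (degreeLTEquiv F m).symm c with hq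
  have hc : degreeLTEquiv F m q = c := (degreeLTEquiv F m).apply_symm_apply c
  have heval : ∀ i, (q : F[X]).eval (t i) = 0 := by
    intro i
    rw [eval_eq_sum_degreeLTEquiv q.2 (t i)]
    simpa [hc] using h i
  have hq0 : (q : F[X]) = 0 := by
    by_cases h0 : (q : F[X]) = 0
    · exact h0
    · refine eq_zero_of_natDegree_lt_card_of_eval_eq_zero _ ht heval ?_
      have := mem_degreeLT.mp q.2
      have := (natDegree_lt_iff_degree_lt h0).mpr this
      omega
  have : q = 0 := Subtype.ext hq0
  rw [← hc, this, map_zero]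

/-- A linear equivalence between a pi-submodule and the product of submodules. -/
noncomputable def piSubmoduleEquiv {R : Type*} [Ring R] {ι : Type*} {M : ι → Type*}
    [∀ i, AddCommGroup (M i)] [∀ i, Module R (M i)] (p : ∀ i, Submodule R (M i)) :
    (Submodule.pi Set.univ p) ≃ₗ[R] ∀ i, p i where
  toFun v i := ⟨v.1 i, v.2 i (Set.mem_univ i)⟩
  invFun w := ⟨fun i => w i, fun i _ => (w i).2⟩
  map_add' u v := rfl
  map_smul' c u := rfl
  left_inv v := rfl
  right_inv w := rfl

lemma evalMap_ker {F : Type*} [Field F] {b r : ℕ} (hb : 2 ≤ b)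
    {x : Fin b → F} (hx : Function.Injective x)
    {y : Fin b → Fin (r + 1) → F}
    (hy : Function.Injective fun p : Fin b × Fin (r + 1) => y p.1 p.2)
    {a : Fin r → Polynomial F} (ha : a ∈ Vspace F b r)
    (h : evalMap F b r x y a = 0) : a = 0 := by
  have hzero : ∀ i ℓ, (a ℓ).eval (x i) = 0 := by
    intro i ℓ
    have key : (fun ℓ : Fin r => (a ℓ).eval (x i)) = 0 := by
      refine coeffs_eq_zero_of_eval _ (fun j : Fin (r+1) => y i j) ?_ (by simp) ?_
      · intro j j' hjj'
        have := hy (a₁ := (i, j)) (a₂ := (i, j')) hjj'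
        simpa using this
      · intro j
        have := congrFun h (i, j)
        simpa [evalMap] using this
    exact congrFun key ℓ
  funext ℓ
  have haℓ : (a ℓ).degree ≤ ((b - 2 : ℕ) : WithBot ℕ) :=
    Polynomial.mem_degreeLE.mp (ha ℓ (Set.mem_univ ℓ))
  by_cases h0 : a ℓ = 0
  · simpa using h0
  · exfalso
    have hlt : (a ℓ).natDegree < b := by
      have := (Polynomial.natDegree_le_iff_degree_le).mpr haℓ
      omega
    have := eq_zero_of_natDegree_lt_card_of_eval_eq_zero (a ℓ) hx (fun i => hzero i ℓ)
      (by simpa using hlt)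
    exact h0 this

/-- the evaluation map `ev_P : V → F_q^n` is injective, and the code
`C = im ev_P` has dimension `(b-1) * r`. -/
theorem evalMap_injOn_and_finrank_range
    (F : Type*) [Field F] [Fintype F] (b r : ℕ) (hb : 2 ≤ b) (hr : 1 ≤ r)
    (x : Fin b → F) (hx : Function.Injective x)
    (y : Fin b → Fin (r + 1) → F)
    (hy : Function.Injective fun p : Fin b × Fin (r + 1) => y p.1 p.2) :
    Set.InjOn (evalMap F b r x y) (Vspace F b r : Set (Fin r → Polynomial F)) ∧
      Module.finrank F ((Vspace F b r).map (evalMap F b r x y)) = (b - 1) * r := by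
  constructor
  · intro u hu v hv huv
    have hmem : u - v ∈ Vspace F b r := Submodule.sub_mem _ hu hv
    have : evalMap F b r x y (u - v) = 0 := by rw [map_sub, huv, sub_self]
    have := evalMap_ker hb hx hy hmem this
    exact sub_eq_zero.mp this
  · have hinj : Function.Injective ((evalMap F b r x y).domRestrict (Vspace F b r)) := by
      rw [← LinearMap.ker_eq_bot, LinearMap.ker_eq_bot']
      intro ⟨a, ha⟩ h
      exact Subtype.ext (evalMap_ker hb hx hy ha h)
    have h1 : Module.finrank F ((Vspace F b r).map (evalMap F b r x y))
        = Module.finrank F (Vspace F b r) := by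
      rw [← LinearMap.range_domRestrict]
      exact LinearMap.finrank_range_of_inj hinj
    rw [h1]
    have h2 : Module.finrank F (Vspace F b r)
        = Module.finrank F (∀ _ : Fin r, degreeLE F ((b - 2 : ℕ) : WithBot ℕ)) :=
      (piSubmoduleEquiv _).finrank_eq
    have hLE : degreeLE F ((b - 2 : ℕ) : WithBot ℕ) = degreeLT F (b - 1) := by
      rw [← degreeLT_succ_eq_degreeLE]
      congr 1
      omega
    rw [hLE] at h2
    have : Module.Finite F (degreeLT F (b - 1)) :=
      Module.Finite.equiv (degreeLTEquiv F (b - 1)).symm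
    have h3 : Module.finrank F (degreeLT F (b - 1)) = b - 1 := by
      rw [(degreeLTEquiv F (b - 1)).finrank_eq, Module.finrank_pi, Fintype.card_fin]
    rw [h2, Module.finrank_pi_fintype]
    simp [h3, Finset.sum_const, mul_comm]
end

section
/- For every 1 ≤ i ≤ b and 1 ≤ j ≤ r+1, if f, g ∈ V satisfy f(x_i, y_{i,j'}) = g(x_i, y_{i,j'}) for all j' ∈ {1,…,r+1} with j' ≠ j, then f(x_i, y_{i,j}) = g(x_i, y_{i,j}). In other words, each symbol of a codeword of C is uniquely determined by the r other symbols coming from the same batch, so C is locally recoverable with locality r. -/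
/-- each symbol of a codeword is uniquely determined by the `r` other
symbols coming from the same batch, so the code is locally recoverable with locality `r`. -/
theorem local_recovery_within_batch
    (F : Type*) [Field F] [Fintype F] (b r : ℕ) (hb : 2 ≤ b) (hr : 1 ≤ r)
    (x : Fin b → F) (hx : Function.Injective x)
    (y : Fin b → Fin (r + 1) → F)
    (hy : Function.Injective fun p : Fin b × Fin (r + 1) => y p.1 p.2)
    (i : Fin b) (j : Fin (r + 1))
    (f g : Fin r → Polynomial F)
    (hf : ∀ ℓ, (f ℓ).degree ≤ ((b - 2 : ℕ) : WithBot ℕ))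
    (hg : ∀ ℓ, (g ℓ).degree ≤ ((b - 2 : ℕ) : WithBot ℕ))
    (hagree : ∀ j' : Fin (r + 1), j' ≠ j →
      ∑ ℓ : Fin r, (f ℓ).eval (x i) * y i j' ^ (ℓ : ℕ) =
      ∑ ℓ : Fin r, (g ℓ).eval (x i) * y i j' ^ (ℓ : ℕ)) :
    ∑ ℓ : Fin r, (f ℓ).eval (x i) * y i j ^ (ℓ : ℕ) =
      ∑ ℓ : Fin r, (g ℓ).eval (x i) * y i j ^ (ℓ : ℕ) := by
  classical
  set c : Fin r → F := fun ℓ => (f ℓ).eval (x i) - (g ℓ).eval (x i) with hc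
  set p : Polynomial F :=
    ∑ ℓ : Fin r, Polynomial.C (c ℓ) * Polynomial.X ^ (ℓ : ℕ) with hp
  have hpeval : ∀ t : F, p.eval t = ∑ ℓ : Fin r, c ℓ * t ^ (ℓ : ℕ) := by
    intro t; simp [hp, Polynomial.eval_finset_sum]
  have hzero : ∀ j' : {j' : Fin (r + 1) // j' ≠ j}, p.eval (y i j'.1) = 0 := by
    rintro ⟨j', hj'⟩
    have := hagree j' hj'
    rw [hpeval]
    simp only [hc, sub_mul]
    rw [Finset.sum_sub_distrib]
    simpa [sub_eq_zero] using this
  have hinj : Function.Injective fun j' : {j' : Fin (r + 1) // j' ≠ j} => y i j'.1 := by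
    intro a b hab
    have : ((i, a.1) : Fin _ × Fin _) = (i, b.1) := hy hab
    exact Subtype.ext (by simpa using congrArg Prod.snd this)
  have hcard : Fintype.card {j' : Fin (r + 1) // j' ≠ j} = r := by
    simp [Fintype.card_subtype_compl]
  have hdeg : p.natDegree < r := by
    have : p.degree < (r : WithBot ℕ) := by
      apply lt_of_le_of_lt (Polynomial.degree_sum_le _ _)
      refine (Finset.sup_lt_iff (α := WithBot ℕ) (by exact_mod_cast WithBot.bot_lt_coe r)).mpr ?_
      intro ℓ _
      exact lt_of_le_of_lt (Polynomial.degree_C_mul_X_pow_le _ _) (by exact_mod_cast ℓ.2)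
    rcases eq_or_ne p 0 with h | h
    · simp [h]; omega
    · exact_mod_cast (Polynomial.degree_eq_natDegree h ▸ this)
  have hp0 : p = 0 :=
    Polynomial.eq_zero_of_natDegree_lt_card_of_eval_eq_zero p hinj hzero (by rw [hcard]; exact hdeg)
  have := hpeval (y i j)
  rw [hp0] at this
  simp only [Polynomial.eval_zero] at this
  have h2 : ∑ ℓ : Fin r, c ℓ * y i j ^ (ℓ : ℕ) = 0 := this.symm
  simp only [hc, sub_mul] at h2
  rw [Finset.sum_sub_distrib, sub_eq_zero] at h2
  exact h2
end

section
/- If b ≥ 3, then there exists a polynomial f ∈ V such that the codeword ev_P(f) has Hamming weight exactly r+3. In particular, the minimum distance of C satisfies d ≤ r+3. -/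
theorem card_filter_lt' (n k : ℕ) (hk : k ≤ n) :
    (Finset.univ.filter fun i : Fin n => (i:ℕ) < k).card = k := by
  have : (Finset.univ.filter fun i : Fin n => (i:ℕ) < k) =
      (Finset.univ : Finset (Fin k)).map ⟨Fin.castLE hk, Fin.castLE_injective hk⟩ := by
    ext i
    simp only [Finset.mem_filter, Finset.mem_map, Finset.mem_univ, true_and,
      Function.Embedding.coeFn_mk]
    constructor
    · intro h; exact ⟨⟨i, h⟩, rfl⟩
    · rintro ⟨j, rfl⟩; exact j.isLt
  rw [this]; simp

/-- if `b ≥ 3` there is a polynomial `f ∈ V` whose codeword `ev_P f` has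
Hamming weight exactly `r + 3`; in particular the minimum distance satisfies `d ≤ r + 3`. -/
theorem exists_codeword_weight_r_add_three
    (F : Type*) [Field F] [Fintype F] [DecidableEq F] (b r : ℕ) (hb : 3 ≤ b) (hr : 1 ≤ r)
    (x : Fin b → F) (hx : Function.Injective x)
    (y : Fin b → Fin (r + 1) → F)
    (hy : Function.Injective fun p : Fin b × Fin (r + 1) => y p.1 p.2) :
    ∃ f : Fin r → Polynomial F,
      (∀ ℓ, (f ℓ).degree ≤ ((b - 2 : ℕ) : WithBot ℕ)) ∧
      (Finset.univ.filter fun p : Fin b × Fin (r + 1) =>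
        (∑ ℓ : Fin r, (f ℓ).eval (x p.1) * y p.1 p.2 ^ (ℓ : ℕ)) ≠ 0).card = r + 3 := by
  classical
  haveI : NeZero b := ⟨by omega⟩
  have hval1 : ((1 : Fin b) : ℕ) = 1 := by
    rw [Fin.val_one']; exact Nat.mod_eq_of_lt (by omega)
  set sg : Finset (Fin b) := Finset.univ.filter fun i : Fin b => 2 ≤ (i:ℕ) with hsg
  set sh : Finset (Fin (r+1)) := Finset.univ.filter fun j : Fin (r+1) => (j:ℕ) < r - 1 with hsh
  set g : Polynomial F := ∏ i ∈ sg, (Polynomial.X - Polynomial.C (x i)) with hg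
  set h : Polynomial F := ∏ j ∈ sh, (Polynomial.X - Polynomial.C (y 1 j)) with hh
  -- cardinalities
  have hcardg : sg.card = b - 2 := by
    have h1 := Finset.card_filter_add_card_filter_not
      (s := (Finset.univ : Finset (Fin b))) (p := fun i : Fin b => 2 ≤ (i:ℕ))
    have h2 : (Finset.univ.filter fun i : Fin b => ¬ 2 ≤ (i:ℕ)).card = 2 := by
      have he : (Finset.univ.filter fun i : Fin b => ¬ 2 ≤ (i:ℕ))
          = (Finset.univ.filter fun i : Fin b => (i:ℕ) < 2) := by
        apply Finset.filter_congr; intro i _; simp [Nat.not_le]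
      rw [he]; exact card_filter_lt' b 2 (by omega)
    simp only [Finset.card_univ, Fintype.card_fin] at h1
    rw [h2] at h1
    rw [hsg]
    omega
  have hcardh : sh.card = r - 1 := card_filter_lt' (r+1) (r-1) (by omega)
  -- degree of g
  have hgdeg : g.degree = ((b - 2 : ℕ) : WithBot ℕ) := by
    rw [hg, Polynomial.degree_prod]
    rw [Finset.sum_congr rfl (fun i _ => Polynomial.degree_X_sub_C (x i))]
    simp [hcardg]
  -- natDegree of h
  have hhdeg : h.natDegree < r := by
    have h1 : h.natDegree ≤ ∑ j ∈ sh, (Polynomial.X - Polynomial.C (y 1 j)).natDegree :=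
      Polynomial.natDegree_prod_le _ _
    have h2 : ∑ j ∈ sh, (Polynomial.X - Polynomial.C (y 1 j)).natDegree = sh.card := by
      rw [Finset.sum_congr rfl (fun j _ => Polynomial.natDegree_X_sub_C (y 1 j))]
      simp
    omega
  -- the sum equals g.eval * h.eval
  have hsum : ∀ (i : Fin b) (j : Fin (r+1)),
      (∑ ℓ : Fin r, (Polynomial.C (h.coeff ℓ) * g).eval (x i) * y i j ^ (ℓ:ℕ))
      = g.eval (x i) * h.eval (y i j) := by
    intro i j
    calc (∑ ℓ : Fin r, (Polynomial.C (h.coeff ℓ) * g).eval (x i) * y i j ^ (ℓ:ℕ))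
        = ∑ ℓ : Fin r, g.eval (x i) * (h.coeff ℓ * y i j ^ (ℓ:ℕ)) := by
          refine Finset.sum_congr rfl fun ℓ _ => ?_
          simp [Polynomial.eval_mul]; ring
      _ = g.eval (x i) * ∑ ℓ : Fin r, h.coeff ℓ * y i j ^ (ℓ:ℕ) := by
          rw [Finset.mul_sum]
      _ = g.eval (x i) * h.eval (y i j) := by
          rw [Polynomial.eval_eq_sum_range' hhdeg]
          congr 1
          exact Fin.sum_univ_eq_sum_range (fun m => h.coeff m * y i j ^ m) r
  -- vanishing criteria
  have hgz : ∀ i : Fin b, g.eval (x i) = 0 ↔ 2 ≤ (i:ℕ) := by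
    intro i
    rw [hg, Polynomial.eval_prod]
    rw [Finset.prod_eq_zero_iff]
    constructor
    · rintro ⟨k, hk, hk0⟩
      simp only [Polynomial.eval_sub, Polynomial.eval_X, Polynomial.eval_C] at hk0
      have : i = k := hx (sub_eq_zero.mp hk0)
      subst this
      exact (Finset.mem_filter.mp hk).2
    · intro hi
      exact ⟨i, Finset.mem_filter.mpr ⟨Finset.mem_univ _, hi⟩, by simp⟩
  have hhz : ∀ (i : Fin b) (j : Fin (r+1)),
      h.eval (y i j) = 0 ↔ ((i:ℕ) = 1 ∧ (j:ℕ) < r - 1) := by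
    intro i j
    rw [hh, Polynomial.eval_prod, Finset.prod_eq_zero_iff]
    constructor
    · rintro ⟨k, hk, hk0⟩
      simp only [Polynomial.eval_sub, Polynomial.eval_X, Polynomial.eval_C] at hk0
      have heq : y i j = y 1 k := sub_eq_zero.mp hk0
      have : (i, j) = ((1 : Fin b), k) := hy heq
      have h1 : i = 1 := congrArg Prod.fst this
      have h2 : j = k := congrArg Prod.snd this
      subst h1; subst h2
      exact ⟨hval1, (Finset.mem_filter.mp hk).2⟩
    · rintro ⟨hi1, hj⟩
      have : i = 1 := by
        apply Fin.ext; rw [hval1, hi1]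
      subst this
      exact ⟨j, Finset.mem_filter.mpr ⟨Finset.mem_univ _, hj⟩, by simp⟩
  -- the key equivalence
  have key : ∀ (i : Fin b) (j : Fin (r+1)),
      (g.eval (x i) * h.eval (y i j) ≠ 0) ↔
        ((i:ℕ) = 0 ∨ ((i:ℕ) = 1 ∧ r - 1 ≤ (j:ℕ))) := by
    intro i j
    rw [mul_ne_zero_iff]
    rw [ne_eq, hgz i, ne_eq, hhz i j]
    omega
  refine ⟨fun ℓ => Polynomial.C (h.coeff ℓ) * g, ?_, ?_⟩
  · intro ℓ
    calc (Polynomial.C (h.coeff ℓ) * g).degree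
        ≤ (Polynomial.C (h.coeff ℓ)).degree + g.degree := Polynomial.degree_mul_le _ _
      _ ≤ 0 + ((b - 2 : ℕ) : WithBot ℕ) := add_le_add Polynomial.degree_C_le (le_of_eq hgdeg)
      _ = ((b - 2 : ℕ) : WithBot ℕ) := zero_add _
  · have hS : (Finset.univ.filter fun p : Fin b × Fin (r + 1) =>
        (∑ ℓ : Fin r, (Polynomial.C (h.coeff ℓ) * g).eval (x p.1) * y p.1 p.2 ^ (ℓ : ℕ)) ≠ 0) =
        ((Finset.univ.filter fun i : Fin b => (i:ℕ) = 0) ×ˢ (Finset.univ : Finset (Fin (r+1)))) ∪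
        ((Finset.univ.filter fun i : Fin b => (i:ℕ) = 1) ×ˢ
          (Finset.univ.filter fun j : Fin (r+1) => r - 1 ≤ (j:ℕ))) := by
      ext ⟨i, j⟩
      simp only [Finset.mem_filter, Finset.mem_univ, true_and, Finset.mem_union,
        Finset.mem_product, Finset.mem_filter, Finset.mem_univ, true_and]
      rw [hsum i j, key i j]
      tauto
    rw [hS]
    have hdisj : Disjoint
        ((Finset.univ.filter fun i : Fin b => (i:ℕ) = 0) ×ˢ (Finset.univ : Finset (Fin (r+1))))
        ((Finset.univ.filter fun i : Fin b => (i:ℕ) = 1) ×ˢ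
          (Finset.univ.filter fun j : Fin (r+1) => r - 1 ≤ (j:ℕ))) := by
      rw [Finset.disjoint_left]
      rintro ⟨i, j⟩ h1 h2
      simp only [Finset.mem_product, Finset.mem_filter] at h1 h2
      omega
    rw [Finset.card_union_of_disjoint hdisj, Finset.card_product, Finset.card_product]
    have c0 : (Finset.univ.filter fun i : Fin b => (i:ℕ) = 0).card = 1 := by
      rw [Finset.card_eq_one]
      exact ⟨⟨0, by omega⟩, by ext i; simp only [Finset.mem_filter, Finset.mem_univ, true_and, Finset.mem_singleton, Fin.ext_iff, Fin.val_mk]⟩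
    have c1 : (Finset.univ.filter fun i : Fin b => (i:ℕ) = 1).card = 1 := by
      rw [Finset.card_eq_one]
      exact ⟨⟨1, by omega⟩, by ext i; simp [Fin.ext_iff]⟩
    have c2 : (Finset.univ.filter fun j : Fin (r+1) => r - 1 ≤ (j:ℕ)).card = 2 := by
      have h1 := Finset.card_filter_add_card_filter_not
        (s := (Finset.univ : Finset (Fin (r+1)))) (p := fun j : Fin (r+1) => (j:ℕ) < r - 1)
      have h2 : (Finset.univ.filter fun j : Fin (r+1) => ¬ (j:ℕ) < r - 1)
          = (Finset.univ.filter fun j : Fin (r+1) => r - 1 ≤ (j:ℕ)) := by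
        congr 1; ext j; simp [Nat.not_lt]
      rw [h2] at h1
      have h3 := card_filter_lt' (r+1) (r-1) (by omega)
      simp only [Finset.card_univ, Fintype.card_fin] at h1
      omega
    rw [c0, c1, c2, Finset.card_univ, Fintype.card_fin]
    omega
end

section
/- (Fiber Vanishing Lemma) Let b ≥ 3 and let f ∈ V be a nonzero polynomial. Then the number of indices i ∈ {1,…,b} such that A_i is a zero-fiber of f (i.e., f(x_i, y_{i,j}) = 0 for all 1 ≤ j ≤ r+1) is at most b−2. -/
open scoped Classical

open Polynomial in
lemma coeffs_zero_of_vanish {F : Type*} [Field F] (r : ℕ) (c : Fin r → F)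
    (t : Fin (r + 1) → F) (ht : Function.Injective t)
    (h : ∀ j, ∑ ℓ : Fin r, c ℓ * t j ^ (ℓ : ℕ) = 0) : ∀ ℓ, c ℓ = 0 := by
  set g : F[X] := ∑ ℓ : Fin r, C (c ℓ) * X ^ (ℓ : ℕ) with hg
  have hgeval : ∀ j, g.eval (t j) = 0 := by
    intro j
    simpa [hg, eval_finset_sum] using h j
  have hdeg : g.natDegree < Fintype.card (Fin (r + 1)) := by
    rw [Fintype.card_fin]
    rw [Nat.lt_succ_iff]
    refine natDegree_sum_le_of_forall_le _ _ fun ℓ _ => ?_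
    exact le_trans (natDegree_C_mul_le _ _) (by simpa using Nat.le_of_lt_succ (Nat.lt_succ_of_lt ℓ.2))
  have hg0 : g = 0 := eq_zero_of_natDegree_lt_card_of_eval_eq_zero g ht hgeval hdeg
  intro ℓ
  have := congrArg (fun p => Polynomial.coeff p (ℓ : ℕ)) hg0
  simp only [hg, finset_sum_coeff, coeff_C_mul, coeff_X_pow, coeff_zero] at this
  rw [Finset.sum_eq_single ℓ] at this
  · simpa using this
  · intro b _ hb
    simp [Fin.val_eq_val, Ne.symm hb]
  · simp

/-- Fiber Vanishing Lemma: if `b ≥ 3` and `f ∈ V` is nonzero, then the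
number of zero-fibers of `f` is at most `b - 2`. -/
theorem zero_fibers_le_b_sub_two
    (F : Type*) [Field F] [Fintype F] (b r : ℕ) (hb : 3 ≤ b) (hr : 1 ≤ r)
    (x : Fin b → F) (hx : Function.Injective x)
    (y : Fin b → Fin (r + 1) → F)
    (hy : Function.Injective fun p : Fin b × Fin (r + 1) => y p.1 p.2)
    (f : Fin r → Polynomial F)
    (hf : ∀ ℓ, (f ℓ).degree ≤ ((b - 2 : ℕ) : WithBot ℕ))
    (hne : f ≠ 0) :
    (Finset.univ.filter fun i : Fin b =>
        ∀ j : Fin (r + 1), ∑ ℓ : Fin r, (f ℓ).eval (x i) * y i j ^ (ℓ : ℕ) = 0).card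
      ≤ b - 2 := by
  set S := Finset.univ.filter fun i : Fin b =>
      ∀ j : Fin (r + 1), ∑ ℓ : Fin r, (f ℓ).eval (x i) * y i j ^ (ℓ : ℕ) = 0 with hS
  by_contra hcard
  push_neg at hcard
  -- each i ∈ S makes all coefficients vanish at x i
  have hvan : ∀ i ∈ S, ∀ ℓ, (f ℓ).eval (x i) = 0 := by
    intro i hi ℓ
    have hmem := (Finset.mem_filter.mp hi).2
    have hyinj : Function.Injective (y i) := fun j₁ j₂ h =>
      (Prod.mk.injEq _ _ _ _).mp (hy (a₁ := (i, j₁)) (a₂ := (i, j₂)) h) |>.2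
    exact coeffs_zero_of_vanish r (fun ℓ => (f ℓ).eval (x i)) (y i) hyinj hmem ℓ
  -- consider S.image x
  have hcard' : b - 2 < (S.image x).card := by
    rwa [Finset.card_image_of_injective _ hx]
  have hzero : ∀ ℓ, f ℓ = 0 := by
    intro ℓ
    refine Polynomial.eq_zero_of_natDegree_lt_card_of_eval_eq_zero' (f ℓ) (S.image x) ?_ ?_
    · intro v hv
      obtain ⟨i, hi, rfl⟩ := Finset.mem_image.mp hv
      exact hvan i hi ℓ
    · exact lt_of_le_of_lt (Polynomial.natDegree_le_iff_degree_le.mpr (hf ℓ)) hcard'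
  exact hne (funext hzero)
end

section
/- Let b ≥ 3, let f ∈ V be a nonzero polynomial, and let s be the number of zero-fibers of f. Then the number of points P ∈ P with f(P) = 0 is at most b(r−1) + 2s. -/
open scoped Classical

/-- if `b ≥ 3`, `f ∈ V` is nonzero and `s` is its number of zero-fibers,
then `f` vanishes at most at `b(r-1) + 2s` points of `P`. -/
theorem zeros_le_of_zero_fibers
    (F : Type*) [Field F] [Fintype F] (b r : ℕ) (hb : 3 ≤ b) (hr : 1 ≤ r)
    (x : Fin b → F) (hx : Function.Injective x)
    (y : Fin b → Fin (r + 1) → F)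
    (hy : Function.Injective fun p : Fin b × Fin (r + 1) => y p.1 p.2)
    (f : Fin r → Polynomial F)
    (hf : ∀ ℓ, (f ℓ).degree ≤ ((b - 2 : ℕ) : WithBot ℕ))
    (hne : f ≠ 0)
    (s : ℕ)
    (hs : s = (Finset.univ.filter fun i : Fin b =>
        ∀ j : Fin (r + 1), ∑ ℓ : Fin r, (f ℓ).eval (x i) * y i j ^ (ℓ : ℕ) = 0).card) :
    (Finset.univ.filter fun p : Fin b × Fin (r + 1) =>
        ∑ ℓ : Fin r, (f ℓ).eval (x p.1) * y p.1 p.2 ^ (ℓ : ℕ) = 0).card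
      ≤ b * (r - 1) + 2 * s := by
  classical
  set g : Fin b → Polynomial F :=
    fun i => ∑ ℓ : Fin r, Polynomial.C ((f ℓ).eval (x i)) * Polynomial.X ^ (ℓ : ℕ) with hg
  have hgev : ∀ i t, (g i).eval t = ∑ ℓ : Fin r, (f ℓ).eval (x i) * t ^ (ℓ : ℕ) := by
    intro i t
    simp [hg, Polynomial.eval_finset_sum]
  have hgdeg : ∀ i, (g i).natDegree ≤ r - 1 := by
    intro i
    refine Polynomial.natDegree_sum_le_of_forall_le _ _ ?_
    intro ℓ _
    calc (Polynomial.C ((f ℓ).eval (x i)) * Polynomial.X ^ (ℓ : ℕ)).natDegree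
        ≤ (Polynomial.X ^ (ℓ : ℕ) : Polynomial F).natDegree :=
          Polynomial.natDegree_C_mul_le _ _
      _ = (ℓ : ℕ) := Polynomial.natDegree_X_pow _
      _ ≤ r - 1 := by have := ℓ.isLt; omega
  -- per-fiber bound
  have key : ∀ i : Fin b,
      (Finset.univ.filter fun j : Fin (r + 1) =>
        ∑ ℓ : Fin r, (f ℓ).eval (x i) * y i j ^ (ℓ : ℕ) = 0).card
      ≤ (r - 1) + (if (∀ j : Fin (r + 1),
          ∑ ℓ : Fin r, (f ℓ).eval (x i) * y i j ^ (ℓ : ℕ) = 0) then 2 else 0) := by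
    intro i
    by_cases hz : ∀ j : Fin (r + 1), ∑ ℓ : Fin r, (f ℓ).eval (x i) * y i j ^ (ℓ : ℕ) = 0
    · rw [if_pos hz]
      calc (Finset.univ.filter fun j : Fin (r + 1) =>
            ∑ ℓ : Fin r, (f ℓ).eval (x i) * y i j ^ (ℓ : ℕ) = 0).card
          ≤ (Finset.univ : Finset (Fin (r + 1))).card := Finset.card_filter_le _ _
        _ = r + 1 := by simp
        _ ≤ (r - 1) + 2 := by omega
    · rw [if_neg hz]
      simp only [Nat.add_zero]
      push_neg at hz
      obtain ⟨j₀, hj₀⟩ := hz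
      have hgne : g i ≠ 0 := by
        intro h
        apply hj₀
        rw [← hgev i (y i j₀), h, Polynomial.eval_zero]
      have hsub : ∀ j ∈ (Finset.univ.filter fun j : Fin (r + 1) =>
          ∑ ℓ : Fin r, (f ℓ).eval (x i) * y i j ^ (ℓ : ℕ) = 0),
          y i j ∈ (g i).roots.toFinset := by
        intro j hj
        rw [Finset.mem_filter] at hj
        rw [Multiset.mem_toFinset, Polynomial.mem_roots hgne, Polynomial.IsRoot.def,
          hgev i (y i j)]
        exact hj.2
      have hinj : ∀ j ∈ (Finset.univ.filter fun j : Fin (r + 1) =>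
          ∑ ℓ : Fin r, (f ℓ).eval (x i) * y i j ^ (ℓ : ℕ) = 0),
          ∀ j' ∈ (Finset.univ.filter fun j : Fin (r + 1) =>
          ∑ ℓ : Fin r, (f ℓ).eval (x i) * y i j ^ (ℓ : ℕ) = 0),
          y i j = y i j' → j = j' := by
        intro j _ j' _ h
        have := hy (a₁ := (i, j)) (a₂ := (i, j')) h
        exact (Prod.mk.injEq _ _ _ _ ▸ this).2
      calc (Finset.univ.filter fun j : Fin (r + 1) =>
            ∑ ℓ : Fin r, (f ℓ).eval (x i) * y i j ^ (ℓ : ℕ) = 0).card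
          ≤ (g i).roots.toFinset.card := Finset.card_le_card_of_injOn _ hsub hinj
        _ ≤ Multiset.card (g i).roots := (g i).roots.toFinset_card_le
        _ ≤ (g i).natDegree := Polynomial.card_roots' _
        _ ≤ r - 1 := hgdeg i
  -- total via fiberwise sum
  have hcard : (Finset.univ.filter fun p : Fin b × Fin (r + 1) =>
        ∑ ℓ : Fin r, (f ℓ).eval (x p.1) * y p.1 p.2 ^ (ℓ : ℕ) = 0).card
      = ∑ i : Fin b, (Finset.univ.filter fun j : Fin (r + 1) =>
        ∑ ℓ : Fin r, (f ℓ).eval (x i) * y i j ^ (ℓ : ℕ) = 0).card := by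
    simp only [Finset.card_filter]
    rw [Fintype.sum_prod_type]
  rw [hcard, hs]
  calc ∑ i : Fin b, (Finset.univ.filter fun j : Fin (r + 1) =>
        ∑ ℓ : Fin r, (f ℓ).eval (x i) * y i j ^ (ℓ : ℕ) = 0).card
      ≤ ∑ i : Fin b, ((r - 1) + (if (∀ j : Fin (r + 1),
          ∑ ℓ : Fin r, (f ℓ).eval (x i) * y i j ^ (ℓ : ℕ) = 0) then 2 else 0)) :=
        Finset.sum_le_sum fun i _ => key i
    _ = b * (r - 1) + 2 * (Finset.univ.filter fun i : Fin b =>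
        ∀ j : Fin (r + 1), ∑ ℓ : Fin r, (f ℓ).eval (x i) * y i j ^ (ℓ : ℕ) = 0).card := by
        rw [Finset.sum_add_distrib, Finset.sum_const, Finset.card_univ, Fintype.card_fin,
          smul_eq_mul, ← Finset.sum_filter, Finset.sum_const, smul_eq_mul]
        ring
end

section
/- Let b ≥ 3 and let f ∈ V be a nonzero polynomial with exactly b−2 zero-fibers. Then the number of points P ∈ P with f(P) = 0 is at most (b−2)(r+1) + (r−1). -/
open scoped Classical

open Polynomial Finset in
private lemma coeff_sum_fin {F : Type*} [Semiring F] {r : ℕ} (a : Fin r → F) (k : Fin r) :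
    (∑ ℓ : Fin r, C (a ℓ) * X ^ (ℓ : ℕ)).coeff (k : ℕ) = a k := by
  rw [Polynomial.finset_sum_coeff]
  have : ∀ ℓ : Fin r, (C (a ℓ) * X ^ (ℓ : ℕ)).coeff (k : ℕ)
      = if ℓ = k then a ℓ else 0 := by
    intro ℓ
    simp [Polynomial.coeff_C_mul, Polynomial.coeff_X_pow, Fin.val_eq_val, eq_comm]
  simp [this]

open Polynomial Finset in
private lemma natDegree_sum_fin_le {F : Type*} [Semiring F] {r : ℕ} (hr : 1 ≤ r)
    (a : Fin r → F) : (∑ ℓ : Fin r, C (a ℓ) * X ^ (ℓ : ℕ)).natDegree ≤ r - 1 := by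
  apply Polynomial.natDegree_sum_le_of_forall_le
  intro ℓ _
  refine le_trans (Polynomial.natDegree_mul_le) ?_
  simp only [Polynomial.natDegree_C, zero_add]
  refine le_trans (Polynomial.natDegree_X_pow_le _) ?_
  omega

/-- if `b ≥ 3` and `f ∈ V` is nonzero with exactly `b - 2` zero-fibers,
then `f` vanishes at most at `(b-2)(r+1) + (r-1)` points of `P`. -/
theorem zeros_le_of_max_zero_fibers
    (F : Type*) [Field F] [Fintype F] (b r : ℕ) (hb : 3 ≤ b) (hr : 1 ≤ r)
    (x : Fin b → F) (hx : Function.Injective x)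
    (y : Fin b → Fin (r + 1) → F)
    (hy : Function.Injective fun p : Fin b × Fin (r + 1) => y p.1 p.2)
    (f : Fin r → Polynomial F)
    (hf : ∀ ℓ, (f ℓ).degree ≤ ((b - 2 : ℕ) : WithBot ℕ))
    (hne : f ≠ 0)
    (hs : (Finset.univ.filter fun i : Fin b =>
        ∀ j : Fin (r + 1), ∑ ℓ : Fin r, (f ℓ).eval (x i) * y i j ^ (ℓ : ℕ) = 0).card
      = b - 2) :
    (Finset.univ.filter fun p : Fin b × Fin (r + 1) =>
        ∑ ℓ : Fin r, (f ℓ).eval (x p.1) * y p.1 p.2 ^ (ℓ : ℕ) = 0).card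
      ≤ (b - 2) * (r + 1) + (r - 1) := by
  classical
  set S : Finset (Fin b) := Finset.univ.filter fun i : Fin b =>
      ∀ j : Fin (r + 1), ∑ ℓ : Fin r, (f ℓ).eval (x i) * y i j ^ (ℓ : ℕ) = 0 with hSdef
  -- Step 1: on each zero-fiber, all coefficient polynomials vanish
  have hvan : ∀ i ∈ S, ∀ ℓ : Fin r, (f ℓ).eval (x i) = 0 := by
    intro i hi ℓ
    have hi' : ∀ j : Fin (r + 1),
        ∑ ℓ : Fin r, (f ℓ).eval (x i) * y i j ^ (ℓ : ℕ) = 0 :=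
      (Finset.mem_filter.mp hi).2
    set q : Polynomial F :=
      ∑ ℓ : Fin r, Polynomial.C ((f ℓ).eval (x i)) * Polynomial.X ^ (ℓ : ℕ) with hq
    have hinj : Function.Injective (y i) := by
      intro j₁ j₂ h
      have := hy (a₁ := (i, j₁)) (a₂ := (i, j₂)) h
      exact (Prod.mk.injEq _ _ _ _ ▸ this).2
    have hq0 : q = 0 := by
      apply Polynomial.eq_zero_of_natDegree_lt_card_of_eval_eq_zero q hinj
      · intro j
        rw [hq]
        simpa [Polynomial.eval_finset_sum] using hi' j
      · have := natDegree_sum_fin_le hr (fun ℓ => (f ℓ).eval (x i))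
        rw [← hq] at this
        simp only [Fintype.card_fin]
        omega
    have := coeff_sum_fin (fun ℓ => (f ℓ).eval (x i)) ℓ
    rw [← hq, hq0] at this
    simpa using this.symm
  -- the vanishing product polynomial
  set hpoly : Polynomial F := ∏ i ∈ S, (Polynomial.X - Polynomial.C (x i)) with hhp
  have hmonic : hpoly.Monic :=
    Polynomial.monic_prod_of_monic _ _ fun i _ => Polynomial.monic_X_sub_C (x i)
  have hpne : hpoly ≠ 0 := hmonic.ne_zero
  have hpdeg : hpoly.natDegree = b - 2 := by
    rw [hhp, Polynomial.natDegree_prod _ _ (fun i _ => Polynomial.X_sub_C_ne_zero (x i))]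
    simp [hs]
  -- Step 2: each f ℓ is a constant multiple of hpoly
  have key : ∀ ℓ : Fin r, ∃ c : F, f ℓ = Polynomial.C c * hpoly := by
    intro ℓ
    rcases eq_or_ne (f ℓ) 0 with h0 | h0
    · exact ⟨0, by simp [h0]⟩
    have hdvd : hpoly ∣ f ℓ := by
      have hsub : (S.val.map x) ≤ (f ℓ).roots := by
        rw [Multiset.le_iff_subset (S.nodup.map hx)]
        intro a ha
        obtain ⟨i, hi, rfl⟩ := Multiset.mem_map.mp ha
        rw [Polynomial.mem_roots h0]
        exact hvan i hi ℓ
      have hd := (Multiset.prod_X_sub_C_dvd_iff_le_roots h0 (S.val.map x)).mpr hsub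
      have h2 : hpoly
          = (Multiset.map (fun a => Polynomial.X - Polynomial.C a)
              (Multiset.map x S.val)).prod := by
        rw [Multiset.map_map, hhp, Finset.prod_eq_multiset_prod]
        rfl
      rw [h2]
      exact hd
    obtain ⟨q, hqeq⟩ := hdvd
    have hq0 : q ≠ 0 := by
      rintro rfl; rw [mul_zero] at hqeq; exact h0 hqeq
    have hdeg : (f ℓ).natDegree ≤ b - 2 :=
      Polynomial.natDegree_le_iff_degree_le.mpr (hf ℓ)
    have hmul : (f ℓ).natDegree = hpoly.natDegree + q.natDegree := by
      rw [hqeq, Polynomial.natDegree_mul hpne hq0]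
    have hq0' : q.natDegree = 0 := by omega
    obtain ⟨c0, rfl⟩ : ∃ c0, q = Polynomial.C c0 :=
      ⟨q.coeff 0, Polynomial.eq_C_of_natDegree_le_zero hq0'.le⟩
    exact ⟨c0, hqeq.trans (mul_comm _ _)⟩
  choose c hc using key
  -- the common y-polynomial
  set g : Polynomial F := ∑ ℓ : Fin r, Polynomial.C (c ℓ) * Polynomial.X ^ (ℓ : ℕ) with hg
  have hgcoeff : ∀ ℓ : Fin r, g.coeff (ℓ : ℕ) = c ℓ := fun ℓ => coeff_sum_fin c ℓ
  have hgne : g ≠ 0 := by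
    have : ∃ ℓ, f ℓ ≠ 0 := by
      by_contra h
      push_neg at h
      exact hne (funext h)
    obtain ⟨ℓ, hℓ⟩ := this
    have hcℓ : c ℓ ≠ 0 := by
      rintro h; rw [hc ℓ, h] at hℓ; simp at hℓ
    intro h
    rw [h] at hgcoeff
    exact hcℓ ((hgcoeff ℓ).symm.trans (by simp))
  have hgdeg : g.natDegree ≤ r - 1 := natDegree_sum_fin_le hr c
  -- the factorization identity for the evaluation sum
  have hfact : ∀ (i : Fin b) (t : F),
      ∑ ℓ : Fin r, (f ℓ).eval (x i) * t ^ (ℓ : ℕ)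
        = hpoly.eval (x i) * g.eval t := by
    intro i t
    rw [hg, Polynomial.eval_finset_sum, Finset.mul_sum]
    apply Finset.sum_congr rfl
    intro ℓ _
    rw [hc ℓ]
    simp only [Polynomial.eval_mul, Polynomial.eval_C, Polynomial.eval_pow,
      Polynomial.eval_X]
    ring
  -- hpoly does not vanish off S
  have hEne : ∀ i ∉ S, hpoly.eval (x i) ≠ 0 := by
    intro i hi
    rw [hhp, Polynomial.eval_prod]
    refine Finset.prod_ne_zero_iff.mpr fun i' hi' => ?_
    simp only [Polynomial.eval_sub, Polynomial.eval_X, Polynomial.eval_C, sub_ne_zero]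
    exact fun h => hi (hx h ▸ hi')
  -- Counting
  set T : Finset (Fin b × Fin (r + 1)) := Finset.univ.filter fun p =>
      ∑ ℓ : Fin r, (f ℓ).eval (x p.1) * y p.1 p.2 ^ (ℓ : ℕ) = 0 with hT
  set T' : Finset (Fin b × Fin (r + 1)) := T.filter fun p => p.1 ∉ S with hT'
  have hsplit : T ⊆ (S ×ˢ Finset.univ) ∪ T' := by
    intro p hp
    by_cases h : p.1 ∈ S
    · exact Finset.mem_union_left _ (Finset.mem_product.mpr ⟨h, Finset.mem_univ _⟩)
    · exact Finset.mem_union_right _ (Finset.mem_filter.mpr ⟨hp, h⟩)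
  have hT'card : T'.card ≤ r - 1 := by
    have himg : ∀ p ∈ T', y p.1 p.2 ∈ g.roots.toFinset := by
      intro p hp
      obtain ⟨hpT, hpS⟩ := Finset.mem_filter.mp hp
      have hz : ∑ ℓ : Fin r, (f ℓ).eval (x p.1) * y p.1 p.2 ^ (ℓ : ℕ) = 0 :=
        (Finset.mem_filter.mp hpT).2
      rw [hfact p.1 (y p.1 p.2)] at hz
      have : g.eval (y p.1 p.2) = 0 :=
        (mul_eq_zero.mp hz).resolve_left (hEne p.1 hpS)
      rw [Multiset.mem_toFinset, Polynomial.mem_roots hgne]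
      exact this
    have hinj : Set.InjOn (fun p : Fin b × Fin (r + 1) => y p.1 p.2) T' := fun p _ q _ h =>
      hy h
    calc T'.card ≤ g.roots.toFinset.card :=
          Finset.card_le_card_of_injOn _ himg hinj
      _ ≤ Multiset.card g.roots := Multiset.toFinset_card_le _
      _ ≤ g.natDegree := Polynomial.card_roots' g
      _ ≤ r - 1 := hgdeg
  calc T.card ≤ ((S ×ˢ Finset.univ) ∪ T').card := Finset.card_le_card hsplit
    _ ≤ (S ×ˢ (Finset.univ : Finset (Fin (r + 1)))).card + T'.card :=
        Finset.card_union_le _ _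
    _ ≤ (b - 2) * (r + 1) + (r - 1) := by
        rw [Finset.card_product, hs]
        simp only [Finset.card_univ, Fintype.card_fin]
        omega
end

section
/- Let b ≥ 3 and suppose r ∈ {1, 2, 3}. Then for every nonzero polynomial f ∈ V, regardless of its number of zero-fibers, the number of points P ∈ P with f(P) = 0 is at most (b−2)(r+1) + (r−1). -/
open scoped Classical

open Polynomial Finset

lemma exists_poly_of_coeffs {F : Type*} [Field F] {r : ℕ} (c : Fin r → F) :
    ∃ p : Polynomial F, p.natDegree ≤ r - 1 ∧
      (∀ t : F, p.eval t = ∑ ℓ : Fin r, c ℓ * t ^ (ℓ : ℕ)) ∧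
      ((∃ ℓ, c ℓ ≠ 0) → p ≠ 0) := by
  refine ⟨∑ ℓ : Fin r, Polynomial.C (c ℓ) * Polynomial.X ^ (ℓ : ℕ), ?_, ?_, ?_⟩
  · apply Polynomial.natDegree_sum_le_of_forall_le
    intro ℓ _
    calc (Polynomial.C (c ℓ) * Polynomial.X ^ (ℓ : ℕ)).natDegree
        ≤ (Polynomial.X ^ (ℓ : ℕ) : Polynomial F).natDegree := Polynomial.natDegree_C_mul_le _ _
      _ = (ℓ : ℕ) := Polynomial.natDegree_X_pow _
      _ ≤ r - 1 := by omega
  · intro t; simp [Polynomial.eval_finset_sum]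
  · rintro ⟨ℓ0, h0⟩ hp
    apply h0
    have hcoeff : (∑ ℓ : Fin r, Polynomial.C (c ℓ) * Polynomial.X ^ (ℓ : ℕ)).coeff (ℓ0 : ℕ)
        = c ℓ0 := by
      rw [Polynomial.finset_sum_coeff]
      rw [Finset.sum_eq_single ℓ0]
      · simp
      · intro ℓ _ hℓ
        simp only [Polynomial.coeff_C_mul, Polynomial.coeff_X_pow]
        rw [if_neg (fun h => hℓ (Fin.ext h.symm)), mul_zero]
      · simp
    rw [hp] at hcoeff
    simpa using hcoeff.symm

lemma card_filter_eval_zero_le {F : Type*} [Field F] {m : ℕ} (p : Polynomial F) (hp : p ≠ 0)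
    (t : Fin m → F) (ht : Function.Injective t) :
    (Finset.univ.filter fun j : Fin m => p.eval (t j) = 0).card ≤ p.natDegree := by
  have h1 : (Finset.univ.filter fun j : Fin m => p.eval (t j) = 0).card
      ≤ p.roots.toFinset.card := by
    apply Finset.card_le_card_of_injOn t
    · intro j hj
      simp only [Finset.mem_coe, Finset.mem_filter] at hj
      simp [Multiset.mem_toFinset, Polynomial.mem_roots', hp, Polynomial.IsRoot, hj.2]
    · exact fun a _ b _ h => ht h
  exact h1.trans ((Multiset.toFinset_card_le _).trans (Polynomial.card_roots' p))

/-- if `b ≥ 3` and `r ∈ {1, 2, 3}`, then every nonzero `f ∈ V` vanishes at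
most at `(b-2)(r+1) + (r-1)` points of `P`, regardless of its number of zero-fibers. -/
theorem zeros_le_of_small_locality
    (F : Type*) [Field F] [Fintype F] (b r : ℕ) (hb : 3 ≤ b)
    (hr : r = 1 ∨ r = 2 ∨ r = 3)
    (x : Fin b → F) (hx : Function.Injective x)
    (y : Fin b → Fin (r + 1) → F)
    (hy : Function.Injective fun p : Fin b × Fin (r + 1) => y p.1 p.2)
    (f : Fin r → Polynomial F)
    (hf : ∀ ℓ, (f ℓ).degree ≤ ((b - 2 : ℕ) : WithBot ℕ))
    (hne : f ≠ 0) :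
    (Finset.univ.filter fun p : Fin b × Fin (r + 1) =>
        ∑ ℓ : Fin r, (f ℓ).eval (x p.1) * y p.1 p.2 ^ (ℓ : ℕ) = 0).card
      ≤ (b - 2) * (r + 1) + (r - 1) := by
  classical
  obtain ⟨ℓ0, hℓ0⟩ : ∃ ℓ, f ℓ ≠ 0 := by
    by_contra h; push_neg at h; exact hne (funext h)
  have hdeg : ∀ ℓ, (f ℓ).natDegree ≤ b - 2 :=
    fun ℓ => Polynomial.natDegree_le_iff_degree_le.2 (hf ℓ)
  set Z : Finset (Fin b × Fin (r + 1)) :=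
    Finset.univ.filter fun p : Fin b × Fin (r + 1) =>
      ∑ ℓ : Fin r, (f ℓ).eval (x p.1) * y p.1 p.2 ^ (ℓ : ℕ) = 0 with hZ
  set S : Finset (Fin b) := Finset.univ.filter fun i => ∀ ℓ, (f ℓ).eval (x i) = 0 with hS
  -- |S| ≤ b - 2
  have hScard : S.card ≤ b - 2 := by
    have himg : (S.image x).card = S.card := Finset.card_image_of_injective S hx
    have hsub : S.image x ⊆ (f ℓ0).roots.toFinset := by
      intro a ha
      obtain ⟨i, hi, rfl⟩ := Finset.mem_image.1 ha
      rw [hS, Finset.mem_filter] at hi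
      simp [Multiset.mem_toFinset, Polynomial.mem_roots', hℓ0, Polynomial.IsRoot, hi.2 ℓ0]
    calc S.card = (S.image x).card := himg.symm
      _ ≤ (f ℓ0).roots.toFinset.card := Finset.card_le_card hsub
      _ ≤ Multiset.card (f ℓ0).roots := Multiset.toFinset_card_le _
      _ ≤ (f ℓ0).natDegree := Polynomial.card_roots' _
      _ ≤ b - 2 := hdeg ℓ0
  -- injectivity per column
  have hycol : ∀ i, Function.Injective (y i) := by
    intro i j1 j2 h
    have := hy (a₁ := (i, j1)) (a₂ := (i, j2)) h
    exact (Prod.mk.injEq .. ▸ this).2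
  -- per-column zero count for non-full columns
  have hcol : ∀ i ∉ S, (Finset.univ.filter fun j : Fin (r + 1) =>
      ∑ ℓ : Fin r, (f ℓ).eval (x i) * y i j ^ (ℓ : ℕ) = 0).card ≤ r - 1 := by
    intro i hiS
    obtain ⟨p, hpdeg, hpeval, hpne⟩ := exists_poly_of_coeffs (fun ℓ => (f ℓ).eval (x i))
    have hex : ∃ ℓ, (f ℓ).eval (x i) ≠ 0 := by
      by_contra h; push_neg at h
      exact hiS (by rw [hS]; exact Finset.mem_filter.2 ⟨Finset.mem_univ _, h⟩)
    have hplt := card_filter_eval_zero_le p (hpne hex) (y i) (hycol i)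
    have heq : (Finset.univ.filter fun j : Fin (r + 1) =>
        ∑ ℓ : Fin r, (f ℓ).eval (x i) * y i j ^ (ℓ : ℕ) = 0)
        = (Finset.univ.filter fun j : Fin (r + 1) => p.eval (y i j) = 0) := by
      apply Finset.filter_congr
      intro j _
      rw [hpeval]
    rw [heq]
    exact hplt.trans (hpdeg.trans (le_refl _))
  by_cases hA : S.card ≤ b - 3
  · -- Case A: few full columns
    have hfib : Z.card = ∑ i : Fin b, ((Finset.univ.filter fun j : Fin (r + 1) =>
        ∑ ℓ : Fin r, (f ℓ).eval (x i) * y i j ^ (ℓ : ℕ) = 0)).card := by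
      rw [Finset.card_eq_sum_card_fiberwise (f := Prod.fst) (t := Finset.univ)
        (fun p _ => Finset.mem_univ p.1)]
      apply Finset.sum_congr rfl
      intro i _
      apply Finset.card_bij (fun p _ => p.2)
      · intro p hp
        simp only [Finset.mem_filter, hZ, Finset.mem_univ, true_and] at hp
        simp only [Finset.mem_filter, Finset.mem_univ, true_and]
        rw [← hp.2]; exact hp.1
      · intro p1 hp1 p2 hp2 h
        simp only [Finset.mem_filter, hZ] at hp1 hp2
        exact Prod.ext (hp1.2.trans hp2.2.symm) h
      · intro j hj
        simp only [Finset.mem_filter, Finset.mem_univ, true_and] at hj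
        exact ⟨(i, j), by simp [hZ, hj], rfl⟩
    have hsum : Z.card ≤ S.card * (r + 1) + (b - S.card) * (r - 1) := by
      rw [hfib, ← Finset.sum_add_sum_compl S]
      gcongr ?_ + ?_
      · calc ∑ i ∈ S, ((Finset.univ.filter fun j : Fin (r + 1) =>
            ∑ ℓ : Fin r, (f ℓ).eval (x i) * y i j ^ (ℓ : ℕ) = 0)).card
            ≤ ∑ _i ∈ S, (r + 1) := by
              apply Finset.sum_le_sum
              intro i _
              exact (Finset.card_filter_le _ _).trans (by simp)
          _ = S.card * (r + 1) := by rw [Finset.sum_const, smul_eq_mul]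
      · calc ∑ i ∈ Sᶜ, ((Finset.univ.filter fun j : Fin (r + 1) =>
            ∑ ℓ : Fin r, (f ℓ).eval (x i) * y i j ^ (ℓ : ℕ) = 0)).card
            ≤ ∑ _i ∈ Sᶜ, (r - 1) := by
              apply Finset.sum_le_sum
              intro i hi
              exact hcol i (Finset.mem_compl.1 hi)
          _ = (b - S.card) * (r - 1) := by
              rw [Finset.sum_const, smul_eq_mul, Finset.card_compl]
              simp
    have hcb : S.card ≤ b - 3 := hA
    rcases hr with rfl | rfl | rfl <;> omega
  · -- Case B: S.card = b - 2
    have hSB : S.card = b - 2 := by omega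
    set q : Polynomial F := ∏ i ∈ S, (Polynomial.X - Polynomial.C (x i)) with hq
    have hq0 : q ≠ 0 := by
      rw [hq]
      exact Finset.prod_ne_zero_iff.2 fun i _ => Polynomial.X_sub_C_ne_zero (x i)
    have hqdeg : q.natDegree = b - 2 := by
      rw [hq, Polynomial.natDegree_prod _ _ (fun i _ => Polynomial.X_sub_C_ne_zero (x i))]
      simp [Polynomial.natDegree_X_sub_C, hSB]
    have hdvdc : ∀ ℓ, ∃ cℓ : F, f ℓ = Polynomial.C cℓ * q := by
      intro ℓ
      by_cases h0 : f ℓ = 0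
      · exact ⟨0, by simp [h0]⟩
      · have hdvd : q ∣ f ℓ := by
          have hqq : q = (Multiset.map (fun a => Polynomial.X - Polynomial.C a)
              (S.val.map x)).prod := by
            rw [Multiset.map_map, hq]; rfl
          rw [hqq, Multiset.prod_X_sub_C_dvd_iff_le_roots h0]
          rw [Multiset.le_iff_subset (S.nodup.map hx)]
          intro a ha
          obtain ⟨i, hi, rfl⟩ := Multiset.mem_map.1 ha
          have hiS : i ∈ S := hi
          rw [hS, Finset.mem_filter] at hiS
          exact Polynomial.mem_roots'.2 ⟨h0, hiS.2 ℓ⟩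
        obtain ⟨t, ht⟩ := hdvd
        have ht0 : t ≠ 0 := by rintro rfl; rw [mul_zero] at ht; exact h0 ht
        have hdt : t.natDegree = 0 := by
          have := Polynomial.natDegree_mul hq0 ht0
          rw [← ht] at this
          have := hdeg ℓ
          omega
        refine ⟨t.coeff 0, ?_⟩
        rw [ht, ← Polynomial.eq_C_of_natDegree_eq_zero hdt, mul_comm]
    choose c hc using hdvdc
    obtain ⟨p, hpdeg, hpeval, hpne0⟩ := exists_poly_of_coeffs c
    have hcne : ∃ ℓ, c ℓ ≠ 0 := by
      refine ⟨ℓ0, fun h => hℓ0 ?_⟩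
      rw [hc ℓ0, h]; simp
    have hp0 : p ≠ 0 := hpne0 hcne
    -- zeros with first coordinate not in S map injectively into roots of p
    set Z' : Finset (Fin b × Fin (r + 1)) := Z.filter (fun pt => pt.1 ∉ S) with hZ'
    have hZ'card : Z'.card ≤ r - 1 := by
      have h1 : Z'.card ≤ p.roots.toFinset.card := by
        apply Finset.card_le_card_of_injOn (fun pt => y pt.1 pt.2)
        · intro pt hpt
          rw [hZ', Finset.mem_coe, Finset.mem_filter, hZ, Finset.mem_filter] at hpt
          obtain ⟨⟨-, hsum⟩, hnS⟩ := hpt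
          have hqv : q.eval (x pt.1) ≠ 0 := by
            rw [hq, Polynomial.eval_prod]
            apply Finset.prod_ne_zero_iff.2
            intro i hi
            simp only [Polynomial.eval_sub, Polynomial.eval_X, Polynomial.eval_C]
            exact sub_ne_zero.2 fun h => hnS (hx h ▸ hi)
          have hev : p.eval (y pt.1 pt.2) = 0 := by
            have : ∑ ℓ : Fin r, (f ℓ).eval (x pt.1) * y pt.1 pt.2 ^ (ℓ : ℕ)
                = q.eval (x pt.1) * p.eval (y pt.1 pt.2) := by
              rw [hpeval, Finset.mul_sum]
              apply Finset.sum_congr rfl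
              intro ℓ _
              rw [hc ℓ]
              simp [mul_assoc, mul_comm, mul_left_comm]
            rw [this] at hsum
            exact (mul_eq_zero.1 hsum).resolve_left hqv
          simp [Multiset.mem_toFinset, Polynomial.mem_roots', hp0, Polynomial.IsRoot, hev]
        · intro a _ b' _ h
          have := hy h
          exact Prod.ext (congrArg Prod.fst this) (congrArg Prod.snd this)
      calc Z'.card ≤ p.roots.toFinset.card := h1
        _ ≤ Multiset.card p.roots := Multiset.toFinset_card_le _
        _ ≤ p.natDegree := Polynomial.card_roots' _
        _ ≤ r - 1 := hpdeg
    have hsub : Z ⊆ (S ×ˢ Finset.univ) ∪ Z' := by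
      intro pt hpt
      by_cases h : pt.1 ∈ S
      · exact Finset.mem_union_left _ (Finset.mem_product.2 ⟨h, Finset.mem_univ _⟩)
      · exact Finset.mem_union_right _ (Finset.mem_filter.2 ⟨hpt, h⟩)
    calc Z.card ≤ ((S ×ˢ Finset.univ) ∪ Z').card := Finset.card_le_card hsub
      _ ≤ (S ×ˢ (Finset.univ : Finset (Fin (r + 1)))).card + Z'.card := Finset.card_union_le _ _
      _ = S.card * (r + 1) + Z'.card := by rw [Finset.card_product]; simp
      _ ≤ (b - 2) * (r + 1) + (r - 1) := by rw [hSB]; omega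
end

section
/- Let b ≥ 3 and r ≥ 4. If f ∈ V is nonzero and the codeword ev_P(f) ∈ C has Hamming weight at most r+2, then the number of zero-fibers of f is at most b−3. -/
open scoped Classical

open Polynomial in
lemma coeff_sum_C_mul_X_pow {F : Type*} [Semiring F] {m : ℕ} (a : Fin m → F) (k : Fin m) :
    (∑ ℓ : Fin m, C (a ℓ) * X ^ (ℓ : ℕ)).coeff (k : ℕ) = a k := by
  rw [Polynomial.finset_sum_coeff]
  rw [Finset.sum_eq_single k]
  · simp
  · intro ℓ _ hne
    have : (k : ℕ) ≠ (ℓ : ℕ) := fun h => hne (Fin.val_injective h.symm)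
    simp [Polynomial.coeff_C_mul, Polynomial.coeff_X_pow, this]
  · simp

open Polynomial in
lemma natDegree_sum_C_mul_X_pow_lt {F : Type*} [Semiring F] {m : ℕ} (hm : 0 < m)
    (a : Fin m → F) :
    (∑ ℓ : Fin m, C (a ℓ) * X ^ (ℓ : ℕ)).natDegree < m := by
  have hdeg : (∑ ℓ : Fin m, C (a ℓ) * X ^ (ℓ : ℕ)).degree ≤ ((m - 1 : ℕ) : WithBot ℕ) := by
    refine le_trans (Polynomial.degree_sum_le _ _) ?_
    refine Finset.sup_le fun ℓ _ => ?_
    refine le_trans (Polynomial.degree_C_mul_X_pow_le _ _) ?_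
    exact_mod_cast Nat.cast_le.mpr (by omega : (ℓ : ℕ) ≤ m - 1)
  have := Polynomial.natDegree_le_iff_degree_le.mpr hdeg
  omega

/-- if `b ≥ 3`, `r ≥ 4`, and `f ∈ V` is nonzero with codeword `ev_P f` of
Hamming weight at most `r + 2`, then `f` has at most `b - 3` zero-fibers. -/
theorem zero_fibers_le_of_low_weight
    (F : Type*) [Field F] [Fintype F] (b r : ℕ) (hb : 3 ≤ b) (hr : 4 ≤ r)
    (x : Fin b → F) (hx : Function.Injective x)
    (y : Fin b → Fin (r + 1) → F)
    (hy : Function.Injective fun p : Fin b × Fin (r + 1) => y p.1 p.2)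
    (f : Fin r → Polynomial F)
    (hf : ∀ ℓ, (f ℓ).degree ≤ ((b - 2 : ℕ) : WithBot ℕ))
    (hne : f ≠ 0)
    (hw : (Finset.univ.filter fun p : Fin b × Fin (r + 1) =>
        (∑ ℓ : Fin r, (f ℓ).eval (x p.1) * y p.1 p.2 ^ (ℓ : ℕ)) ≠ 0).card ≤ r + 2) :
    (Finset.univ.filter fun i : Fin b =>
        ∀ j : Fin (r + 1), ∑ ℓ : Fin r, (f ℓ).eval (x i) * y i j ^ (ℓ : ℕ) = 0).card
      ≤ b - 3 := by
  classical
  set S : Finset (Fin b) := Finset.univ.filter fun i : Fin b =>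
      ∀ j : Fin (r + 1), ∑ ℓ : Fin r, (f ℓ).eval (x i) * y i j ^ (ℓ : ℕ) = 0 with hSdef
  by_contra hcon
  push_neg at hcon
  have hS2 : b - 2 ≤ S.card := by omega
  have hdeg : ∀ ℓ, (f ℓ).natDegree ≤ b - 2 := fun ℓ =>
    Polynomial.natDegree_le_iff_degree_le.mpr (hf ℓ)
  -- Step 1: on a zero-fiber, all coefficient polynomials vanish
  have key : ∀ i ∈ S, ∀ ℓ : Fin r, (f ℓ).eval (x i) = 0 := by
    intro i hi ℓ
    have hi' : ∀ j : Fin (r + 1), ∑ ℓ : Fin r, (f ℓ).eval (x i) * y i j ^ (ℓ : ℕ) = 0 :=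
      (Finset.mem_filter.mp hi).2
    set Q : Polynomial F :=
      ∑ ℓ : Fin r, Polynomial.C ((f ℓ).eval (x i)) * Polynomial.X ^ (ℓ : ℕ) with hQdef
    have hyinj : Function.Injective fun j : Fin (r + 1) => y i j := by
      intro j₁ j₂ h
      have := hy (a₁ := (i, j₁)) (a₂ := (i, j₂)) h
      exact (Prod.mk.injEq _ _ _ _ ▸ this).2
    have hQ0 : Q = 0 := by
      apply Polynomial.eq_zero_of_natDegree_lt_card_of_eval_eq_zero Q hyinj
      · intro j
        rw [hQdef]
        simpa [Polynomial.eval_finset_sum] using hi' j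
      · have h : (∑ ℓ : Fin r, Polynomial.C ((f ℓ).eval (x i)) * Polynomial.X ^ (ℓ : ℕ)).natDegree
            < r := natDegree_sum_C_mul_X_pow_lt (by omega) _
        rw [hQdef]
        simp only [Fintype.card_fin]
        omega
    have := coeff_sum_C_mul_X_pow (fun ℓ : Fin r => (f ℓ).eval (x i)) ℓ
    rw [← hQdef, hQ0] at this
    simpa using this.symm
  -- If ever b-1 many roots are known for all f ℓ, then f = 0
  have hSimg : (S.image x).card = S.card := Finset.card_image_of_injective S hx
  have hvanish : ∀ (ℓ : Fin r) (s : Finset F), (∀ t ∈ s, (f ℓ).eval t = 0) →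
      b - 1 ≤ s.card → f ℓ = 0 := by
    intro ℓ s hs hcard
    apply Polynomial.eq_zero_of_natDegree_lt_card_of_eval_eq_zero' (f ℓ) s hs
    have := hdeg ℓ
    omega
  by_cases hbig : b - 1 ≤ S.card
  · exact hne (funext fun ℓ => hvanish ℓ (S.image x)
      (fun t ht => by obtain ⟨i, hi, rfl⟩ := Finset.mem_image.mp ht; exact key i hi ℓ)
      (by omega))
  -- Now S.card = b - 2; the complement has two elements
  have hScard : S.card = b - 2 := by omega
  have hcompl : Sᶜ.card = 2 := by
    have := Finset.card_compl S
    simp only [Fintype.card_fin] at this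
    omega
  obtain ⟨i₀, i₁, hne01, hC⟩ := Finset.card_eq_two.mp hcompl
  have hi₀ : i₀ ∉ S := by
    have : i₀ ∈ Sᶜ := by rw [hC]; simp
    simpa using this
  have hi₁ : i₁ ∉ S := by
    have : i₁ ∈ Sᶜ := by rw [hC]; simp
    simpa using this
  -- vanishing at S together with one extra point kills f ℓ
  have hvan1 : ∀ (ℓ : Fin r) (i : Fin b), i ∉ S → (f ℓ).eval (x i) = 0 → f ℓ = 0 := by
    intro ℓ i hiS hvi
    apply hvanish ℓ (insert (x i) (S.image x))
    · intro t ht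
      rcases Finset.mem_insert.mp ht with rfl | ht
      · exact hvi
      · obtain ⟨i', hi', rfl⟩ := Finset.mem_image.mp ht; exact key i' hi' ℓ
    · rw [Finset.card_insert_of_notMem]
      · omega
      · intro hmem
        obtain ⟨i', hi', he⟩ := Finset.mem_image.mp hmem
        exact hiS (hx he ▸ hi')
  obtain ⟨ℓ₀, hℓ₀⟩ := Function.ne_iff.mp hne
  have he₀ : (f ℓ₀).eval (x i₀) ≠ 0 := fun h => hℓ₀ (hvan1 ℓ₀ i₀ hi₀ h)
  have he₁ : (f ℓ₀).eval (x i₁) ≠ 0 := fun h => hℓ₀ (hvan1 ℓ₀ i₁ hi₁ h)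
  -- proportionality of the two fibers
  have hprop : ∀ ℓ : Fin r,
      (f ℓ₀).eval (x i₀) * (f ℓ).eval (x i₁) = (f ℓ).eval (x i₀) * (f ℓ₀).eval (x i₁) := by
    intro ℓ
    set p : Polynomial F := Polynomial.C ((f ℓ₀).eval (x i₀)) * f ℓ -
        Polynomial.C ((f ℓ).eval (x i₀)) * f ℓ₀ with hpdef
    have hp0 : p = 0 := by
      apply Polynomial.eq_zero_of_natDegree_lt_card_of_eval_eq_zero' p
        (insert (x i₀) (S.image x))
      · intro t ht
        rcases Finset.mem_insert.mp ht with rfl | ht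
        · simp [hpdef]; ring
        · obtain ⟨i', hi', rfl⟩ := Finset.mem_image.mp ht
          simp [hpdef, key i' hi' ℓ, key i' hi' ℓ₀]
      · have h1 : p.natDegree ≤ b - 2 := by
          refine le_trans (Polynomial.natDegree_sub_le _ _) (max_le ?_ ?_) <;>
            exact le_trans (Polynomial.natDegree_C_mul_le _ _) (hdeg _)
        have h2 : x i₀ ∉ S.image x := by
          intro hmem
          obtain ⟨i', hi', he⟩ := Finset.mem_image.mp hmem
          exact hi₀ (hx he ▸ hi')
        rw [Finset.card_insert_of_notMem h2, hSimg]
        omega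
    have := congrArg (Polynomial.eval (x i₁)) hp0
    simp [hpdef, sub_eq_zero] at this
    exact this
  set lam : F := (f ℓ₀).eval (x i₁) / (f ℓ₀).eval (x i₀) with hlam
  have hlamne : lam ≠ 0 := div_ne_zero he₁ he₀
  have hcoef : ∀ ℓ : Fin r, (f ℓ).eval (x i₁) = lam * (f ℓ).eval (x i₀) := by
    intro ℓ
    have h := hprop ℓ
    rw [hlam]
    field_simp
    linear_combination h
  -- the univariate polynomial on fiber i₀
  set Q : Polynomial F :=
    ∑ ℓ : Fin r, Polynomial.C ((f ℓ).eval (x i₀)) * Polynomial.X ^ (ℓ : ℕ) with hQdef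
  have hQne : Q ≠ 0 := by
    intro h
    have := coeff_sum_C_mul_X_pow (fun ℓ : Fin r => (f ℓ).eval (x i₀)) ℓ₀
    rw [← hQdef, h] at this
    exact he₀ (by simpa using this.symm)
  have hQdeg : Q.natDegree < r :=
    natDegree_sum_C_mul_X_pow_lt (by omega) (fun ℓ : Fin r => (f ℓ).eval (x i₀))
  have hQeval : ∀ t : F, Q.eval t = ∑ ℓ : Fin r, (f ℓ).eval (x i₀) * t ^ (ℓ : ℕ) := by
    intro t; simp [hQdef, Polynomial.eval_finset_sum]
  -- weight counting
  set W : Finset (Fin b × Fin (r + 1)) := Finset.univ.filter fun p : Fin b × Fin (r + 1) =>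
      (∑ ℓ : Fin r, (f ℓ).eval (x p.1) * y p.1 p.2 ^ (ℓ : ℕ)) ≠ 0 with hWdef
  set B : Finset (Fin b × Fin (r + 1)) :=
    ({i₀, i₁} : Finset (Fin b)) ×ˢ (Finset.univ : Finset (Fin (r + 1))) with hBdef
  have hBcard : B.card = 2 * (r + 1) := by
    rw [hBdef, Finset.card_product]
    simp [Finset.card_insert_of_notMem, hne01]
  set Bad : Finset (Fin b × Fin (r + 1)) :=
    B.filter fun p => Q.eval (y p.1 p.2) = 0 with hBaddef
  set Good : Finset (Fin b × Fin (r + 1)) :=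
    B.filter fun p => Q.eval (y p.1 p.2) ≠ 0 with hGooddef
  have hGoodW : Good ⊆ W := by
    intro p hp
    obtain ⟨hpB, hpQ⟩ := Finset.mem_filter.mp hp
    rw [hWdef, Finset.mem_filter]
    refine ⟨Finset.mem_univ _, ?_⟩
    have hp1 : p.1 = i₀ ∨ p.1 = i₁ := by
      have := (Finset.mem_product.mp hpB).1
      simpa using this
    rcases hp1 with h1 | h1
    · rw [h1]
      rw [h1] at hpQ
      simpa [hQeval] using hpQ
    · rw [h1]
      rw [h1] at hpQ
      have : (∑ ℓ : Fin r, (f ℓ).eval (x i₁) * y i₁ p.2 ^ (ℓ : ℕ))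
          = lam * Q.eval (y i₁ p.2) := by
        rw [hQeval, Finset.mul_sum]
        exact Finset.sum_congr rfl fun ℓ _ => by rw [hcoef ℓ]; ring
      rw [this]
      exact mul_ne_zero hlamne hpQ
  have hBadcard : Bad.card ≤ r - 1 := by
    have hinj : Set.InjOn (fun p : Fin b × Fin (r + 1) => y p.1 p.2) Bad := fun a _ c _ h =>
      hy h
    have h1 : Bad.card = (Bad.image fun p => y p.1 p.2).card :=
      (Finset.card_image_of_injOn hinj).symm
    have h2 : (Bad.image fun p => y p.1 p.2) ⊆ Q.roots.toFinset := by
      intro t ht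
      obtain ⟨p, hp, rfl⟩ := Finset.mem_image.mp ht
      rw [Multiset.mem_toFinset, Polynomial.mem_roots hQne]
      exact (Finset.mem_filter.mp hp).2
    have h3 := Finset.card_le_card h2
    have h4 := Multiset.toFinset_card_le Q.roots
    have h5 := Polynomial.card_roots' Q
    omega
  have hsplit : Bad.card + Good.card = B.card := by
    rw [hBaddef, hGooddef]
    simpa using Finset.card_filter_add_card_filter_not
      (s := B) (p := fun p : Fin b × Fin (r + 1) => Polynomial.eval (y p.1 p.2) Q = 0)
  have hWcard := Finset.card_le_card hGoodW
  omega
end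

section
/- Let b ≥ 3 and r ∈ {1, 2, 3}. Then the code C has length n = b(r+1), dimension k = (b−1)r, and minimum distance exactly d = r+3; in particular C attains the Singleton-type bound d = n − k − ⌈k/r⌉ + 2, so C is an optimal locally recoverable code with locality r. -/
open scoped Classical

/-- The Hamming weight of a word of length `n = b(r+1)`. -/
noncomputable def hammingWeight {F : Type*} [Field F] {b r : ℕ}
    (c : Fin b × Fin (r + 1) → F) : ℕ :=
  (Finset.univ.filter fun p : Fin b × Fin (r + 1) => c p ≠ 0).card

open Polynomial Finset

namespace LRCAux

def piSubEquiv {R : Type*} [Semiring R] {ι : Type*} {φ : ι → Type*}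
    [∀ i, AddCommMonoid (φ i)] [∀ i, Module R (φ i)] (p : ∀ i, Submodule R (φ i)) :
    (Submodule.pi Set.univ p) ≃ₗ[R] ∀ i, p i where
  toFun f i := ⟨f.1 i, f.2 i (Set.mem_univ i)⟩
  invFun g := ⟨fun i => g i, fun i _ => (g i).2⟩
  left_inv f := rfl
  right_inv g := rfl
  map_add' f g := rfl
  map_smul' c f := rfl

variable {F : Type*} [Field F]

lemma coeff_sum_C_mul_X_pow {r : ℕ} (c : Fin r → F) (ℓ0 : Fin r) :
    (∑ ℓ : Fin r, C (c ℓ) * X ^ (ℓ : ℕ)).coeff (ℓ0 : ℕ) = c ℓ0 := by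
  rw [finset_sum_coeff, Finset.sum_eq_single ℓ0]
  · simp [coeff_C_mul, coeff_X_pow]
  · intro ℓ _ hne
    have : (ℓ0 : ℕ) ≠ (ℓ : ℕ) := fun h => hne (Fin.val_injective h).symm
    simp [coeff_C_mul, coeff_X_pow, this]
  · simp

lemma natDegree_sum_C_mul_X_pow_le {r : ℕ} (c : Fin r → F) :
    (∑ ℓ : Fin r, C (c ℓ) * X ^ (ℓ : ℕ)).natDegree ≤ r - 1 := by
  apply natDegree_sum_le_of_forall_le
  intro ℓ _
  refine le_trans (natDegree_C_mul_le _ _) ?_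
  rw [natDegree_X_pow]
  omega

lemma eval_sum_C_mul_X_pow {r : ℕ} (c : Fin r → F) (t : F) :
    (∑ ℓ : Fin r, C (c ℓ) * X ^ (ℓ : ℕ)).eval t = ∑ ℓ : Fin r, c ℓ * t ^ (ℓ : ℕ) := by
  simp [eval_finset_sum]

lemma card_le_natDegree {p : F[X]} (hp : p ≠ 0) {ι : Type*} (T : Finset ι) (f : ι → F)
    (hf : Set.InjOn f T) (hev : ∀ i ∈ T, p.eval (f i) = 0) : T.card ≤ p.natDegree := by
  classical
  have h2 : T.image f ⊆ p.roots.toFinset := by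
    intro z hz
    obtain ⟨i, hi, rfl⟩ := Finset.mem_image.mp hz
    rw [Multiset.mem_toFinset, mem_roots hp]
    exact hev i hi
  calc T.card = (T.image f).card := (Finset.card_image_of_injOn hf).symm
    _ ≤ p.roots.toFinset.card := Finset.card_le_card h2
    _ ≤ Multiset.card p.roots := Multiset.toFinset_card_le _
    _ ≤ p.natDegree := p.card_roots'

lemma coeffs_eq_zero {r : ℕ} (c : Fin r → F) (z : Fin (r + 1) → F)
    (hz : Function.Injective z) (h : ∀ j, ∑ ℓ : Fin r, c ℓ * z j ^ (ℓ : ℕ) = 0) :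
    ∀ ℓ, c ℓ = 0 := by
  have hp : (∑ ℓ : Fin r, C (c ℓ) * X ^ (ℓ : ℕ)) = 0 := by
    apply Polynomial.eq_zero_of_natDegree_lt_card_of_eval_eq_zero _ hz
    · intro j
      rw [eval_sum_C_mul_X_pow]
      exact h j
    · rw [Fintype.card_fin]
      have := natDegree_sum_C_mul_X_pow_le c
      omega
  intro ℓ
  have := coeff_sum_C_mul_X_pow c ℓ
  rw [hp] at this
  simpa using this.symm

lemma hammingWeight_eq_sum {b r : ℕ} (c : Fin b × Fin (r + 1) → F) :
    hammingWeight c = ∑ i : Fin b, (Finset.univ.filter fun j => c (i, j) ≠ 0).card := by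
  rw [hammingWeight, Finset.card_eq_sum_card_fiberwise
    (f := Prod.fst) (t := Finset.univ) (fun p _ => Finset.mem_univ p.1)]
  refine Finset.sum_congr rfl fun i _ => ?_
  rw [Finset.filter_filter]
  apply Finset.card_nbij (fun p => p.2)
  · rintro ⟨i', j⟩ hp
    simp only [Finset.mem_coe, Finset.mem_filter, Finset.mem_univ, true_and] at hp ⊢
    rcases hp with ⟨h1, rfl⟩
    exact h1
  · rintro ⟨i1, j1⟩ h1 ⟨i2, j2⟩ h2 hj
    simp only [Finset.coe_filter, Set.mem_setOf_eq] at h1 h2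
    simp only at hj
    simp [hj, h1.2, h2.2]
  · intro j hj
    simp only [Finset.coe_filter, Set.mem_setOf_eq, Set.mem_univ, true_and] at hj
    refine ⟨(i, j), ?_, rfl⟩
    simp [hj]

end LRCAux


namespace LRCAux

lemma card_filter_val_lt (n m : ℕ) (hm : m ≤ n) :
    (Finset.univ.filter fun j : Fin n => (j : ℕ) < m).card = m := by
  have h := Finset.card_nbij (s := Finset.univ.filter fun j : Fin n => (j : ℕ) < m)
    (t := Finset.range m) (fun j => (j : ℕ)) ?_ ?_ ?_
  · rwa [Finset.card_range] at h
  · intro j hj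
    simp only [Finset.mem_coe, Finset.mem_filter, Finset.mem_univ, true_and] at hj
    simpa using hj
  · intro j1 _ j2 _ h
    exact Fin.val_injective h
  · intro k hk
    simp only [Finset.coe_range, Set.mem_Iio] at hk
    refine ⟨⟨k, by omega⟩, ?_, rfl⟩
    simp only [Finset.coe_filter, Set.mem_setOf_eq, Finset.mem_univ, true_and]
    simpa using hk

lemma dim_lemma (F : Type*) [Field F] (b r : ℕ) (hb : 3 ≤ b)
    (x : Fin b → F) (hx : Function.Injective x)
    (y : Fin b → Fin (r + 1) → F)
    (hy : Function.Injective fun p : Fin b × Fin (r + 1) => y p.1 p.2) :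
    Module.finrank F ((Vspace F b r).map (evalMap F b r x y)) = (b - 1) * r := by
  set f := evalMap F b r x y with hf
  have hyinj : ∀ i : Fin b, Function.Injective (y i) := by
    intro i j1 j2 hj
    have := @hy (i, j1) (i, j2) hj
    exact (Prod.ext_iff.mp this).2
  have hevf : ∀ (a : Fin r → Polynomial F) (i : Fin b) (j : Fin (r + 1)),
      f a (i, j) = ∑ ℓ : Fin r, (a ℓ).eval (x i) * y i j ^ (ℓ : ℕ) := by
    intro a i j
    rfl
  have hinj : ∀ a ∈ Vspace F b r, f a = 0 → a = 0 := by
    intro a ha h0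
    have hadeg : ∀ ℓ, (a ℓ).natDegree ≤ b - 2 := fun ℓ =>
      Polynomial.natDegree_le_iff_degree_le.mpr
        (Polynomial.mem_degreeLE.mp (ha ℓ (Set.mem_univ ℓ)))
    have hco : ∀ i ℓ, (a ℓ).eval (x i) = 0 := by
      intro i
      apply LRCAux.coeffs_eq_zero _ (y i) (hyinj i)
      intro j
      rw [← hevf, h0]
      rfl
    funext ℓ
    apply Polynomial.eq_zero_of_natDegree_lt_card_of_eval_eq_zero (a ℓ) hx (fun i => hco i ℓ)
    rw [Fintype.card_fin]
    have := hadeg ℓ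
    omega
  -- dimension
  have hVeq : Vspace F b r
      = Submodule.pi Set.univ (fun _ : Fin r => Polynomial.degreeLT F (b - 1)) := by
    have h21 : (b - 2) + 1 = b - 1 := by omega
    unfold Vspace
    rw [← h21, Polynomial.degreeLT_succ_eq_degreeLE]
  have e : (Vspace F b r) ≃ₗ[F] (Fin r → (Fin (b - 1) → F)) :=
    (LinearEquiv.ofEq _ _ hVeq).trans ((LRCAux.piSubEquiv _).trans
      (LinearEquiv.piCongrRight fun _ => Polynomial.degreeLTEquiv F (b - 1)))
  have hfd : FiniteDimensional F (Vspace F b r) := Module.Finite.equiv e.symm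
  have hrank : Module.finrank F (Vspace F b r) = (b - 1) * r := by
    rw [e.finrank_eq, Module.finrank_pi_fintype]
    simp [Module.finrank_pi, Nat.mul_comm]
  have hdim : Module.finrank F ((Vspace F b r).map f) = (b - 1) * r := by
    set φ := f.comp (Vspace F b r).subtype with hφ
    have hφinj : Function.Injective φ := by
      intro u v huv
      have h1 : f (u.1 - v.1) = 0 := by
        rw [map_sub, sub_eq_zero]
        exact huv
      have := hinj (u.1 - v.1) (Submodule.sub_mem _ u.2 v.2) h1
      exact Subtype.ext (by rwa [sub_eq_zero] at this)
    have hmapeq : (Vspace F b r).map f = LinearMap.range φ := by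
      rw [hφ, LinearMap.range_comp, Submodule.range_subtype]
    rw [hmapeq, LinearMap.finrank_range_of_inj hφinj, hrank]
  -- minimum distance lower bound
  exact hdim

set_option maxHeartbeats 800000 in
lemma low_lemma (F : Type*) [Field F] (b r : ℕ) (hb : 3 ≤ b) (hr1 : 1 ≤ r) (hr3 : r ≤ 3)
    (x : Fin b → F) (hx : Function.Injective x)
    (y : Fin b → Fin (r + 1) → F)
    (hy : Function.Injective fun p : Fin b × Fin (r + 1) => y p.1 p.2) :
    ∀ c ∈ (Vspace F b r).map (evalMap F b r x y), c ≠ 0 → r + 3 ≤ hammingWeight c := by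
  set f := evalMap F b r x y with hf
  have hyinj : ∀ i : Fin b, Function.Injective (y i) := by
    intro i j1 j2 hj
    have := @hy (i, j1) (i, j2) hj
    exact (Prod.ext_iff.mp this).2
  have hevf : ∀ (a : Fin r → Polynomial F) (i : Fin b) (j : Fin (r + 1)),
      f a (i, j) = ∑ ℓ : Fin r, (a ℓ).eval (x i) * y i j ^ (ℓ : ℕ) := by
    intro a i j
    rfl
  have hlow : ∀ c ∈ (Vspace F b r).map f, c ≠ 0 → r + 3 ≤ hammingWeight c := by
    rintro c ⟨a, ha, rfl⟩ hc0
    have hadeg : ∀ ℓ, (a ℓ).natDegree ≤ b - 2 := fun ℓ =>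
      Polynomial.natDegree_le_iff_degree_le.mpr
        (Polynomial.mem_degreeLE.mp (ha ℓ (Set.mem_univ ℓ)))
    set g : Fin b → Polynomial F :=
      fun i => ∑ ℓ : Fin r, Polynomial.C ((a ℓ).eval (x i)) * Polynomial.X ^ (ℓ : ℕ) with hg
    have hgeval : ∀ i j, f a (i, j) = (g i).eval (y i j) := by
      intro i j
      rw [hevf, hg, LRCAux.eval_sum_C_mul_X_pow]
    have hgdeg : ∀ i, (g i).natDegree ≤ r - 1 := fun i => LRCAux.natDegree_sum_C_mul_X_pow_le _
    have hgcoeff : ∀ i, g i = 0 → ∀ ℓ, (a ℓ).eval (x i) = 0 := by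
      intro i h0 ℓ
      have h2 := LRCAux.coeff_sum_C_mul_X_pow (fun ℓ => (a ℓ).eval (x i)) ℓ
      have h3 : (∑ ℓ : Fin r, Polynomial.C ((a ℓ).eval (x i)) * Polynomial.X ^ (ℓ : ℕ)) = g i :=
        rfl
      rw [h3, h0] at h2
      simpa using h2.symm
    set M : Finset (Fin b) := Finset.univ.filter (fun i => g i ≠ 0) with hM
    have hsplit : ∀ i : Fin b,
        (Finset.univ.filter fun j => f a (i, j) = 0).card
          + (Finset.univ.filter fun j => f a (i, j) ≠ 0).card = r + 1 := by
      intro i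
      have := Finset.card_filter_add_card_filter_not
        (s := (Finset.univ : Finset (Fin (r + 1)))) (p := fun j => f a (i, j) = 0)
      simpa using this
    have hzle : ∀ i, g i ≠ 0 → (Finset.univ.filter fun j => f a (i, j) = 0).card ≤ r - 1 := by
      intro i hgi
      refine le_trans (LRCAux.card_le_natDegree hgi _ (fun j => y i j)
        ((hyinj i).injOn) ?_) (hgdeg i)
      intro j hj
      rw [← hgeval]
      exact (Finset.mem_filter.mp hj).2
    have ha0 : a ≠ 0 := fun h => hc0 (by rw [h, map_zero])
    obtain ⟨ℓ0, hℓ0⟩ : ∃ ℓ, a ℓ ≠ 0 := by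
      by_contra h
      push_neg at h
      exact ha0 (funext h)
    have hMccard : (Finset.univ \ M).card ≤ b - 2 := by
      refine le_trans (LRCAux.card_le_natDegree hℓ0 _ x hx.injOn ?_) (hadeg ℓ0)
      intro i hi
      simp only [hM, Finset.mem_sdiff, Finset.mem_filter, Finset.mem_univ, true_and,
        not_not] at hi
      exact hgcoeff i hi ℓ0
    have hMcard2 : 2 ≤ M.card := by
      have h1 : (Finset.univ \ M).card = b - M.card :=
        by rw [Finset.card_sdiff_of_subset (Finset.subset_univ M), Finset.card_univ, Fintype.card_fin]
      have h2 : M.card ≤ b := le_trans (Finset.card_le_card (Finset.subset_univ M))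
        (by rw [Finset.card_univ, Fintype.card_fin])
      omega
    have hwsum : hammingWeight (f a)
        = ∑ i : Fin b, (Finset.univ.filter fun j => f a (i, j) ≠ 0).card :=
      LRCAux.hammingWeight_eq_sum _
    have hwge : ∑ i ∈ M, (Finset.univ.filter fun j => f a (i, j) ≠ 0).card
        ≤ hammingWeight (f a) := by
      rw [hwsum]
      exact Finset.sum_le_sum_of_subset (Finset.subset_univ M)
    by_cases hM3 : 3 ≤ M.card
    · have h2le : ∀ i ∈ M, 2 ≤ (Finset.univ.filter fun j => f a (i, j) ≠ 0).card := by
        intro i hi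
        have hgi : g i ≠ 0 := (Finset.mem_filter.mp hi).2
        have := hsplit i
        have := hzle i hgi
        omega
      have := Finset.card_nsmul_le_sum M _ 2 h2le
      have h6 : 6 ≤ ∑ i ∈ M, (Finset.univ.filter fun j => f a (i, j) ≠ 0).card := by
        have : M.card * 2 ≤ ∑ i ∈ M, (Finset.univ.filter fun j => f a (i, j) ≠ 0).card := by
          simpa [smul_eq_mul] using this
        omega
      omega
    · have hM2 : M.card = 2 := by omega
      obtain ⟨i1, i2, hne, hMeq⟩ := Finset.card_eq_two.mp hM2
      have hi1M : i1 ∈ M := by rw [hMeq]; simp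
      have hi2M : i2 ∈ M := by rw [hMeq]; simp
      have hg1 : g i1 ≠ 0 := (Finset.mem_filter.mp hi1M).2
      have hg2 : g i2 ≠ 0 := (Finset.mem_filter.mp hi2M).2
      set N : Finset (Fin b) := Finset.univ \ M with hN
      have hNcard : N.card = b - 2 := by
        rw [hN, Finset.card_sdiff_of_subset (Finset.subset_univ M), Finset.card_univ,
          Fintype.card_fin, hM2]
      set Z : Polynomial F := ∏ i ∈ N, (Polynomial.X - Polynomial.C (x i)) with hZ
      have hZdeg : Z.natDegree ≤ b - 2 := by
        refine le_trans (Polynomial.natDegree_prod_le _ _) ?_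
        simp [Polynomial.natDegree_X_sub_C, hNcard]
      have hZzero : ∀ i ∈ N, Z.eval (x i) = 0 := by
        intro i hi
        rw [hZ, Polynomial.eval_prod]
        apply Finset.prod_eq_zero hi
        simp
      have hZne : ∀ i0 : Fin b, i0 ∉ N → Z.eval (x i0) ≠ 0 := by
        intro i0 hi0
        rw [hZ, Polynomial.eval_prod]
        apply Finset.prod_ne_zero_iff.mpr
        intro i hi
        simp only [Polynomial.eval_sub, Polynomial.eval_X, Polynomial.eval_C, sub_ne_zero]
        intro hxx
        exact hi0 (hx hxx ▸ hi)
      have haN : ∀ i ∈ N, ∀ ℓ, (a ℓ).eval (x i) = 0 := by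
        intro i hi ℓ
        simp only [hN, hM, Finset.mem_sdiff, Finset.mem_filter, Finset.mem_univ, true_and,
          not_not] at hi
        exact hgcoeff i hi ℓ
      have hi1N : i1 ∉ N := by simp [hN, hi1M]
      have hi2N : i2 ∉ N := by simp [hN, hi2M]
      have hkey : ∀ ℓ : Fin r,
          (a ℓ).eval (x i1) * Z.eval (x i2) = Z.eval (x i1) * (a ℓ).eval (x i2) := by
        intro ℓ
        set w : Polynomial F := Polynomial.C ((a ℓ).eval (x i1)) * Z
          - Polynomial.C (Z.eval (x i1)) * (a ℓ) with hw'
        have hwz : w = 0 := by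
          by_contra hw0
          have hc : (insert i1 N).card ≤ w.natDegree := by
            apply LRCAux.card_le_natDegree hw0 _ x hx.injOn
            intro i hi
            rcases Finset.mem_insert.mp hi with rfl | hiN
            · simp [hw']
              ring
            · simp [hw', haN i hiN ℓ, hZzero i hiN]
          have hwdeg : w.natDegree ≤ b - 2 :=
            le_trans (Polynomial.natDegree_sub_le _ _)
              (max_le (le_trans (Polynomial.natDegree_C_mul_le _ _) hZdeg)
                (le_trans (Polynomial.natDegree_C_mul_le _ _) (hadeg ℓ)))
          rw [Finset.card_insert_of_notMem hi1N, hNcard] at hc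
          omega
        have := congrArg (Polynomial.eval (x i2)) hwz
        simp only [hw', Polynomial.eval_sub, Polynomial.eval_mul, Polynomial.eval_C,
          Polynomial.eval_zero, sub_eq_zero] at this
        exact this
      have hprop : ∀ t : F,
          Z.eval (x i1) * (g i2).eval t = Z.eval (x i2) * (g i1).eval t := by
        intro t
        rw [hg, LRCAux.eval_sum_C_mul_X_pow, LRCAux.eval_sum_C_mul_X_pow,
          Finset.mul_sum, Finset.mul_sum]
        refine Finset.sum_congr rfl fun ℓ _ => ?_
        linear_combination (-(t ^ (ℓ : ℕ))) * hkey ℓ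
      have htransfer : ∀ j : Fin (r + 1), f a (i2, j) = 0 → (g i1).eval (y i2 j) = 0 := by
        intro j hj
        rw [hgeval] at hj
        have := hprop (y i2 j)
        rw [hj, mul_zero] at this
        have hz2 : Z.eval (x i2) ≠ 0 := hZne i2 hi2N
        field_simp at this
        rcases mul_eq_zero.mp this.symm with h | h
        · exact absurd h hz2
        · exact h
      -- combined zero count
      set T : Finset (Fin b × Fin (r + 1)) :=
        ((Finset.univ.filter fun j => f a (i1, j) = 0).map
          ⟨fun j => (i1, j), fun a b h => (Prod.ext_iff.mp h).2⟩)
        ∪ ((Finset.univ.filter fun j => f a (i2, j) = 0).map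
          ⟨fun j => (i2, j), fun a b h => (Prod.ext_iff.mp h).2⟩) with hT
      have hTdisj : Disjoint
          ((Finset.univ.filter fun j => f a (i1, j) = 0).map
            ⟨fun j => (i1, j), fun a b h => (Prod.ext_iff.mp h).2⟩)
          ((Finset.univ.filter fun j => f a (i2, j) = 0).map
            ⟨fun j => (i2, j), fun a b h => (Prod.ext_iff.mp h).2⟩) := by
        rw [Finset.disjoint_left]
        rintro ⟨i, j⟩ h1 h2
        simp only [Finset.mem_map, Function.Embedding.coeFn_mk, Prod.mk.injEq, DFunLike.coe] at h1 h2
        obtain ⟨j1, -, hj1, -⟩ := h1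
        obtain ⟨j2, -, hj2, -⟩ := h2
        exact hne (hj1.trans hj2.symm)
      have hTcard : T.card = (Finset.univ.filter fun j => f a (i1, j) = 0).card
          + (Finset.univ.filter fun j => f a (i2, j) = 0).card := by
        rw [hT, Finset.card_union_of_disjoint hTdisj, Finset.card_map, Finset.card_map]
      have hTle : T.card ≤ r - 1 := by
        refine le_trans (LRCAux.card_le_natDegree hg1 T (fun p => y p.1 p.2) hy.injOn ?_)
          (hgdeg i1)
        rintro ⟨i, j⟩ hij
        rw [hT, Finset.mem_union] at hij
        rcases hij with h1 | h1
        · simp only [Finset.mem_map, Function.Embedding.coeFn_mk, Prod.mk.injEq, DFunLike.coe] at h1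
          obtain ⟨j', hj', rfl, rfl⟩ := h1
          rw [← hgeval]
          exact (Finset.mem_filter.mp hj').2
        · simp only [Finset.mem_map, Function.Embedding.coeFn_mk, Prod.mk.injEq, DFunLike.coe] at h1
          obtain ⟨j', hj', rfl, rfl⟩ := h1
          exact htransfer j' (Finset.mem_filter.mp hj').2
      have hsum2 : ∑ i ∈ M, (Finset.univ.filter fun j => f a (i, j) ≠ 0).card
          = (Finset.univ.filter fun j => f a (i1, j) ≠ 0).card
            + (Finset.univ.filter fun j => f a (i2, j) ≠ 0).card := by
        rw [hMeq, Finset.sum_pair hne]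
      have := hsplit i1
      have := hsplit i2
      omega
  exact hlow

set_option maxHeartbeats 800000 in
lemma ex_lemma (F : Type*) [Field F] (b r : ℕ) (hb : 3 ≤ b) (hr1 : 1 ≤ r)
    (x : Fin b → F) (hx : Function.Injective x)
    (y : Fin b → Fin (r + 1) → F)
    (hy : Function.Injective fun p : Fin b × Fin (r + 1) => y p.1 p.2) :
    ∃ c ∈ (Vspace F b r).map (evalMap F b r x y), c ≠ 0 ∧ hammingWeight c = r + 3 := by
  set f := evalMap F b r x y with hf
  have hyinj : ∀ i : Fin b, Function.Injective (y i) := by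
    intro i j1 j2 hj
    have := @hy (i, j1) (i, j2) hj
    exact (Prod.ext_iff.mp this).2
  have hevf : ∀ (a : Fin r → Polynomial F) (i : Fin b) (j : Fin (r + 1)),
      f a (i, j) = ∑ ℓ : Fin r, (a ℓ).eval (x i) * y i j ^ (ℓ : ℕ) := by
    intro a i j
    rfl
  classical
  set i1 : Fin b := ⟨b - 2, by omega⟩ with hi1
  set i2 : Fin b := ⟨b - 1, by omega⟩ with hi2
  have hne : i1 ≠ i2 := by
    simp only [hi1, hi2, ne_eq, Fin.mk.injEq]
    omega
  have hJc : (Finset.univ.filter fun j : Fin (r + 1) => (j : ℕ) < r - 1).card = r - 1 :=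
    card_filter_val_lt (r + 1) (r - 1) (by omega)
  set N : Finset (Fin b) := Finset.univ \ ({i1, i2} : Finset (Fin b)) with hN
  have hpair : ({i1, i2} : Finset (Fin b)).card = 2 := by
    rw [Finset.card_insert_of_notMem (by simp [hne]), Finset.card_singleton]
  have hNcard : N.card = b - 2 := by
    rw [hN, Finset.card_sdiff_of_subset (Finset.subset_univ _), Finset.card_univ, Fintype.card_fin, hpair]
  set Z : Polynomial F := ∏ i ∈ N, (Polynomial.X - Polynomial.C (x i)) with hZ
  have hZdeg : Z.natDegree ≤ b - 2 := by
    refine le_trans (Polynomial.natDegree_prod_le _ _) ?_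
    simp [Polynomial.natDegree_X_sub_C, hNcard]
  have hZzero : ∀ i ∈ N, Z.eval (x i) = 0 := by
    intro i hi
    rw [hZ, Polynomial.eval_prod]
    apply Finset.prod_eq_zero hi
    simp
  have hZne : ∀ i0 : Fin b, i0 ∉ N → Z.eval (x i0) ≠ 0 := by
    intro i0 hi0
    rw [hZ, Polynomial.eval_prod]
    apply Finset.prod_ne_zero_iff.mpr
    intro i hi
    simp only [Polynomial.eval_sub, Polynomial.eval_X, Polynomial.eval_C, sub_ne_zero]
    intro hxx
    exact hi0 (hx hxx ▸ hi)
  have hi1N : i1 ∉ N := by simp [hN]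
  have hi2N : i2 ∉ N := by simp [hN]
  have hZ1 : Z.eval (x i1) ≠ 0 := hZne i1 hi1N
  have hZ2 : Z.eval (x i2) ≠ 0 := hZne i2 hi2N
  set q : Polynomial F :=
    ∏ j ∈ (Finset.univ.filter fun j : Fin (r + 1) => (j : ℕ) < r - 1),
      (Polynomial.X - Polynomial.C (y i1 j)) with hq
  have hqdeg : q.natDegree < r := by
    have h1 : q.natDegree ≤ (Finset.univ.filter fun j : Fin (r + 1) => (j : ℕ) < r - 1).card := by
      refine le_trans (Polynomial.natDegree_prod_le _ _) ?_
      simp [Polynomial.natDegree_X_sub_C]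
    omega
  have hyne12 : ∀ (j j' : Fin (r + 1)), y i2 j ≠ y i1 j' := by
    intro j j' hyy
    have := @hy (i2, j) (i1, j') hyy
    exact hne ((Prod.ext_iff.mp this).1).symm
  have hq2 : ∀ j, q.eval (y i2 j) ≠ 0 := by
    intro j
    rw [hq, Polynomial.eval_prod]
    apply Finset.prod_ne_zero_iff.mpr
    intro j' _
    simp only [Polynomial.eval_sub, Polynomial.eval_X, Polynomial.eval_C, sub_ne_zero]
    exact hyne12 j j'
  have hq1 : ∀ j : Fin (r + 1), q.eval (y i1 j) = 0 ↔ (j : ℕ) < r - 1 := by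
    intro j
    rw [hq, Polynomial.eval_prod]
    constructor
    · intro h0
      obtain ⟨j', hj', hz⟩ := Finset.prod_eq_zero_iff.mp h0
      have hyy : y i1 j = y i1 j' := by
        simpa [sub_eq_zero] using hz
      have hjj : j = j' := hyinj i1 hyy
      rw [hjj]
      exact (Finset.mem_filter.mp hj').2
    · intro hj
      exact Finset.prod_eq_zero (Finset.mem_filter.mpr ⟨Finset.mem_univ _, hj⟩) (by simp)
  set a0 : Fin r → Polynomial F := fun ℓ => Polynomial.C (q.coeff (ℓ : ℕ)) * Z with ha0
  have hmem : a0 ∈ Vspace F b r := fun ℓ _ =>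
    Polynomial.mem_degreeLE.mpr (Polynomial.natDegree_le_iff_degree_le.mp
      (le_trans (Polynomial.natDegree_C_mul_le _ _) hZdeg))
  have heval : ∀ i j, f a0 (i, j) = Z.eval (x i) * q.eval (y i j) := by
    intro i j
    rw [hevf]
    simp only [ha0, Polynomial.eval_mul, Polynomial.eval_C]
    rw [Polynomial.eval_eq_sum_range' hqdeg (y i j), Finset.mul_sum,
      Fin.sum_univ_eq_sum_range (fun k => q.coeff k * Polynomial.eval (x i) Z * y i j ^ k) r]
    exact Finset.sum_congr rfl fun k _ => by ring
  refine ⟨f a0, ⟨a0, hmem, rfl⟩, ?_, ?_⟩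
  · intro h0
    have := congrFun h0 (i2, ⟨0, by omega⟩)
    rw [heval] at this
    exact mul_ne_zero hZ2 (hq2 _) this
  · rw [LRCAux.hammingWeight_eq_sum]
    have hzero : ∀ i ∈ (Finset.univ : Finset (Fin b)), i ∉ ({i1, i2} : Finset (Fin b)) →
        (Finset.univ.filter fun j => f a0 (i, j) ≠ 0).card = 0 := by
      intro i _ hi
      rw [Finset.card_eq_zero, Finset.filter_eq_empty_iff]
      intro j _
      simp only [ne_eq, not_not]
      rw [heval, hZzero i (Finset.mem_sdiff.mpr ⟨Finset.mem_univ _, hi⟩), zero_mul]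
    rw [← Finset.sum_subset (Finset.subset_univ ({i1, i2} : Finset (Fin b))) hzero,
      Finset.sum_pair hne]
    have hcard2 : (Finset.univ.filter fun j => f a0 (i2, j) ≠ 0).card = r + 1 := by
      rw [Finset.filter_true_of_mem, Finset.card_univ, Fintype.card_fin]
      intro j _
      rw [heval]
      exact mul_ne_zero hZ2 (hq2 j)
    have hcard1 : (Finset.univ.filter fun j => f a0 (i1, j) ≠ 0).card = 2 := by
      have hfe : (Finset.univ.filter fun j => f a0 (i1, j) ≠ 0)
          = (Finset.univ.filter fun j : Fin (r + 1) => ¬((j : ℕ) < r - 1)) := by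
        apply Finset.filter_congr
        intro j _
        rw [heval, mul_ne_zero_iff, and_iff_right hZ1]
        exact not_congr (hq1 j)
      rw [hfe]
      have hsum := Finset.card_filter_add_card_filter_not
        (s := (Finset.univ : Finset (Fin (r + 1)))) (p := fun j : Fin (r + 1) => (j : ℕ) < r - 1)
      rw [Finset.card_univ, Fintype.card_fin] at hsum
      omega
    rw [hcard1, hcard2]
    omega


end LRCAux

/-- for `b ≥ 3` and `r ∈ {1,2,3}`, the code `C` has length `n = b(r+1)`,
dimension `k = (b-1)r`, and minimum distance exactly `d = r+3`, attaining the
Singleton-type bound `d = n - k - ⌈k/r⌉ + 2`; so `C` is an optimal LRC with locality `r`. -/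
theorem code_is_optimal_for_small_locality
    (F : Type*) [Field F] [Fintype F] (b r : ℕ) (hb : 3 ≤ b)
    (hr : r = 1 ∨ r = 2 ∨ r = 3)
    (x : Fin b → F) (hx : Function.Injective x)
    (y : Fin b → Fin (r + 1) → F)
    (hy : Function.Injective fun p : Fin b × Fin (r + 1) => y p.1 p.2) :
    Fintype.card (Fin b × Fin (r + 1)) = b * (r + 1) ∧
    Module.finrank F ((Vspace F b r).map (evalMap F b r x y)) = (b - 1) * r ∧
    (∀ c ∈ (Vspace F b r).map (evalMap F b r x y), c ≠ 0 → r + 3 ≤ hammingWeight c) ∧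
    (∃ c ∈ (Vspace F b r).map (evalMap F b r x y), c ≠ 0 ∧ hammingWeight c = r + 3) ∧
    r + 3 = b * (r + 1) - (b - 1) * r - ((b - 1) * r + r - 1) / r + 2 := by
  have hr1 : 1 ≤ r := by rcases hr with rfl | rfl | rfl <;> norm_num
  have hr3 : r ≤ 3 := by rcases hr with rfl | rfl | rfl <;> norm_num
  exact ⟨by simp, LRCAux.dim_lemma F b r hb x hx y hy,
    LRCAux.low_lemma F b r hb hr1 hr3 x hx y hy,
    LRCAux.ex_lemma F b r hb hr1 x hx y hy,
    by rcases hr with rfl | rfl | rfl <;> omega⟩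
end

section
/- Let K be a field, b ≥ 2 an integer, and let x_1, …, x_b ∈ K be pairwise distinct and x'_1, …, x'_b ∈ K be pairwise distinct. Let M and M' be the (b−1) × b matrices over K with entries M_{u,v} = x_v^{u−1} and M'_{u,v} = (x'_v)^{u−1} for 1 ≤ u ≤ b−1 and 1 ≤ v ≤ b. Then there exist an invertible (b−1) × (b−1) matrix A and an invertible diagonal b × b matrix D over K such that A·M·D = M'. -/
open Polynomial Finset

lemma key_sum (K : Type*) [Field K] (b : ℕ) (y : Fin b → K) (hy : Function.Injective y)
    (u : ℕ) (hu : u < b - 1) :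
    ∑ v : Fin b, y v ^ u * (Lagrange.basis Finset.univ y v).coeff (b - 1) = 0 := by
  have hcard : (Finset.univ : Finset (Fin b)).card = b := by simp
  have hinj : Set.InjOn y (Finset.univ : Finset (Fin b)) := hy.injOn
  have hdeg : (X ^ u : K[X]).degree < ((Finset.univ : Finset (Fin b)).card : ℕ) := by
    rw [hcard, degree_X_pow]
    exact_mod_cast hu.trans_le (Nat.sub_le b 1)
  have h := Lagrange.eq_interpolate hinj hdeg
  have h2 := congrArg (fun p => Polynomial.coeff p (b - 1)) h
  simp only [Lagrange.interpolate_apply, Polynomial.finset_sum_coeff, coeff_C_mul,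
    eval_pow, eval_X, coeff_X_pow] at h2
  rw [if_neg hu.ne'] at h2
  exact h2.symm

/-- given two tuples of pairwise distinct elements of a field `K`, the
corresponding `(b-1) × b` Vandermonde-type matrices `M` and `M'` (with `M u v = x v ^ u`)
are related by `A · M · D = M'` for some invertible square matrix `A` and some invertible
diagonal matrix `D`. -/
theorem vandermonde_row_equivalence
    (K : Type*) [Field K] (b : ℕ) (hb : 2 ≤ b)
    (x x' : Fin b → K)
    (hx : Function.Injective x) (hx' : Function.Injective x')
    (M M' : Matrix (Fin (b - 1)) (Fin b) K)
    (hM : ∀ (u : Fin (b - 1)) (v : Fin b), M u v = x v ^ (u : ℕ))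
    (hM' : ∀ (u : Fin (b - 1)) (v : Fin b), M' u v = x' v ^ (u : ℕ)) :
    ∃ (A : Matrix (Fin (b - 1)) (Fin (b - 1)) K) (D : Fin b → K),
      IsUnit A ∧ (∀ v, D v ≠ 0) ∧ A * M * Matrix.diagonal D = M' := by
  classical
  have hinj : Set.InjOn x (Finset.univ : Finset (Fin b)) := hx.injOn
  have hinj' : Set.InjOn x' (Finset.univ : Finset (Fin b)) := hx'.injOn
  have hcard : (Finset.univ : Finset (Fin b)).card = b := by simp
  set c : Fin b → K := fun v => (Lagrange.basis Finset.univ x v).coeff (b - 1) with hc_def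
  set c' : Fin b → K := fun v => (Lagrange.basis Finset.univ x' v).coeff (b - 1) with hc'_def
  have hcne : ∀ v, c v ≠ 0 := by
    intro v
    have h1 : (Lagrange.basis Finset.univ x v).natDegree = b - 1 := by
      rw [Lagrange.natDegree_basis hinj (Finset.mem_univ v), hcard]
    rw [hc_def]
    simp only [← h1, Polynomial.coeff_natDegree]
    exact Polynomial.leadingCoeff_ne_zero.mpr (Lagrange.basis_ne_zero hinj (Finset.mem_univ v))
  have hc'ne : ∀ v, c' v ≠ 0 := by
    intro v
    have h1 : (Lagrange.basis Finset.univ x' v).natDegree = b - 1 := by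
      rw [Lagrange.natDegree_basis hinj' (Finset.mem_univ v), hcard]
    rw [hc'_def]
    simp only [← h1, Polynomial.coeff_natDegree]
    exact Polynomial.leadingCoeff_ne_zero.mpr (Lagrange.basis_ne_zero hinj' (Finset.mem_univ v))
  have hk : ∀ u : ℕ, u < b - 1 → ∑ v : Fin b, x v ^ u * c v = 0 :=
    fun u hu => key_sum K b x hx u hu
  have hk' : ∀ u : ℕ, u < b - 1 → ∑ v : Fin b, x' v ^ u * c' v = 0 :=
    fun u hu => key_sum K b x' hx' u hu
  set D : Fin b → K := fun v => c v / c' v with hD_def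
  have hDne : ∀ v, D v ≠ 0 := fun v => div_ne_zero (hcne v) (hc'ne v)
  set r : Fin (b - 1) → Fin b → K := fun u v => x' v ^ (u : ℕ) * c' v / c v with hr_def
  set q : Fin (b - 1) → K[X] := fun u => Lagrange.interpolate Finset.univ x (r u) with hq_def
  have hq_eval : ∀ u v, (q u).eval (x v) = r u v := fun u v =>
    Lagrange.eval_interpolate_at_node (r u) hinj (Finset.mem_univ v)
  have hq_top : ∀ u, (q u).coeff (b - 1) = 0 := by
    intro u
    rw [hq_def]
    simp only [Lagrange.interpolate_apply, Polynomial.finset_sum_coeff, coeff_C_mul]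
    have : ∀ v : Fin b, r u v * c v = x' v ^ (u : ℕ) * c' v := by
      intro v
      rw [hr_def]
      field_simp [hcne v]
    calc ∑ v : Fin b, r u v * (Lagrange.basis Finset.univ x v).coeff (b-1)
        = ∑ v : Fin b, x' v ^ (u : ℕ) * c' v := Finset.sum_congr rfl fun v _ => this v
      _ = 0 := hk' (u : ℕ) u.isLt
  have hq_coeff_ge : ∀ u (w : ℕ), b - 1 ≤ w → (q u).coeff w = 0 := by
    intro u w hw
    rcases eq_or_lt_of_le hw with h | h
    · rw [← h]; exact hq_top u
    · apply Polynomial.coeff_eq_zero_of_degree_lt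
      have hd := Lagrange.degree_interpolate_lt (r u) hinj
      rw [hcard] at hd
      refine hd.trans_le ?_
      exact_mod_cast Nat.cast_le.mpr (by omega)
  have hq_nat : ∀ u, (q u).natDegree < b - 1 := by
    intro u
    rcases eq_or_ne (q u) 0 with h | h
    · rw [h, Polynomial.natDegree_zero]; omega
    · exact (Polynomial.natDegree_lt_iff_degree_lt h).mpr
        ((Polynomial.degree_lt_iff_coeff_zero _ _).mpr fun m hm => hq_coeff_ge u m (by exact_mod_cast hm))
  have heval_sum : ∀ u v, ∑ w : Fin (b - 1), (q u).coeff (w : ℕ) * x v ^ (w : ℕ)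
      = (q u).eval (x v) := by
    intro u v
    rw [Polynomial.eval_eq_sum_range' (hq_nat u), Fin.sum_univ_eq_sum_range
      (fun w => (q u).coeff w * x v ^ w)]
  set A : Matrix (Fin (b - 1)) (Fin (b - 1)) K :=
    Matrix.of (fun u w => (q u).coeff (w : ℕ)) with hA_def
  refine ⟨A, D, ?_, hDne, ?_⟩
  · -- IsUnit A
    rw [Matrix.isUnit_iff_isUnit_det, isUnit_iff_ne_zero]
    intro hdet
    have hdetT : A.transpose.det = 0 := by rw [Matrix.det_transpose]; exact hdet
    obtain ⟨t, ht, htm⟩ := (Matrix.exists_mulVec_eq_zero_iff).mpr hdetT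
    have hvec : ∀ w : Fin (b - 1), ∑ u : Fin (b - 1), (q u).coeff (w : ℕ) * t u = 0 := by
      intro w
      have := congrFun htm w
      simpa [Matrix.mulVec, Matrix.transpose_apply, dotProduct, hA_def] using this
    set p : K[X] := ∑ u : Fin (b - 1), C (t u) * q u with hp_def
    have hp0 : p = 0 := by
      ext w
      rw [Polynomial.coeff_zero, hp_def, Polynomial.finset_sum_coeff]
      simp only [coeff_C_mul]
      by_cases hw : w < b - 1
      · have := hvec ⟨w, hw⟩
        calc ∑ u : Fin (b-1), t u * (q u).coeff w
            = ∑ u : Fin (b-1), (q u).coeff w * t u := Finset.sum_congr rfl fun u _ => mul_comm _ _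
          _ = 0 := this
      · exact Finset.sum_eq_zero fun u _ => by
          rw [hq_coeff_ge u w (by omega), mul_zero]
    have hveval : ∀ v, ∑ u : Fin (b - 1), t u * x' v ^ (u : ℕ) = 0 := by
      intro v
      have h0 : (∑ u : Fin (b - 1), t u * r u v) = 0 := by
        have := congrArg (Polynomial.eval (x v)) hp0
        simpa [hp_def, Polynomial.eval_finset_sum, hq_eval] using this
      have hstep : ∀ u : Fin (b - 1), t u * x' v ^ (u : ℕ) = (t u * r u v) * (c v / c' v) := by
        intro u
        rw [hr_def]
        field_simp [hcne v, hc'ne v]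
      rw [Finset.sum_congr rfl fun u _ => hstep u, ← Finset.sum_mul, h0, zero_mul]
    set s2 : K[X] := ∑ u : Fin (b - 1), C (t u) * X ^ (u : ℕ) with hs2_def
    have hs2deg : s2.degree < (b : ℕ) := by
      apply (Polynomial.degree_lt_iff_coeff_zero _ _).mpr
      intro m hm
      rw [hs2_def, Polynomial.finset_sum_coeff]
      apply Finset.sum_eq_zero
      intro u _
      rw [coeff_C_mul, coeff_X_pow, if_neg (by have := u.isLt; omega : ¬ m = (u : ℕ)), mul_zero]
    have hs2eval : ∀ v, s2.eval (x' v) = 0 := by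
      intro v
      rw [hs2_def]
      simpa [Polynomial.eval_finset_sum] using hveval v
    have hs2nat : s2.natDegree < Fintype.card (Fin b) := by
      rw [Fintype.card_fin]
      rcases eq_or_ne s2 0 with h | h
      · rw [h, Polynomial.natDegree_zero]; omega
      · exact (Polynomial.natDegree_lt_iff_degree_lt h).mpr hs2deg
    have hs2 : s2 = 0 :=
      Polynomial.eq_zero_of_natDegree_lt_card_of_eval_eq_zero s2 hx' hs2eval hs2nat
    obtain ⟨u, hu⟩ := Function.ne_iff.mp ht
    apply hu
    have : s2.coeff (u : ℕ) = t u := by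
      rw [hs2_def, Polynomial.finset_sum_coeff,
        Finset.sum_eq_single_of_mem u (Finset.mem_univ u)
          (fun u' _ hne => by rw [coeff_C_mul, coeff_X_pow,
            if_neg (fun h => hne (Fin.val_injective h.symm)), mul_zero]),
        coeff_C_mul, coeff_X_pow, if_pos rfl, mul_one]
    rw [← this, hs2, Polynomial.coeff_zero]
    rfl
  · -- the identity
    ext u v
    rw [Matrix.mul_diagonal, Matrix.mul_apply, hM' u v]
    have h1 : ∑ w : Fin (b - 1), A u w * M w v
        = ∑ w : Fin (b - 1), (q u).coeff (w : ℕ) * x v ^ (w : ℕ) :=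
      Finset.sum_congr rfl fun w _ => by rw [hA_def, hM w v]; rfl
    rw [h1, heval_sum u v, hq_eval u v, hr_def, hD_def]
    field_simp [hcne v, hc'ne v]
end

section
/- Fix pairwise distinct elements y_{i,j} ∈ F_q (1 ≤ i ≤ b, 1 ≤ j ≤ r+1). Let x_1, …, x_b ∈ F_q be pairwise distinct and let x'_1, …, x'_b ∈ F_q be pairwise distinct. Let C be the code obtained from the point set P = {(x_i, y_{i,j})} and let C' be the code obtained from the point set P' = {(x'_i, y_{i,j})} (same V and same y-coordinates in both cases). Then the minimum distance of C equals the minimum distance of C'. -/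
open scoped Classical

/-- The minimum distance of a linear code: the smallest Hamming weight of a
nonzero codeword. -/
noncomputable def minDist {F : Type*} [Field F] {b r : ℕ}
    (C : Submodule F (Fin b × Fin (r + 1) → F)) : ℕ :=
  sInf {w : ℕ | ∃ c ∈ C, c ≠ 0 ∧ hammingWeight c = w}

open Polynomial Finset

lemma leadingCoeff_lagrange_basis {F : Type*} [Field F] {b : ℕ} (v : Fin b → F) (i : Fin b) :
    (Lagrange.basis Finset.univ v i).leadingCoeff
      = ∏ j ∈ Finset.univ.erase i, (v i - v j)⁻¹ := by
  rw [Lagrange.basis, leadingCoeff_prod]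
  refine Finset.prod_congr rfl fun j hj => ?_
  rw [Lagrange.basisDivisor, leadingCoeff_mul, leadingCoeff_C, leadingCoeff_X_sub_C, mul_one]

lemma coeff_interpolate {F : Type*} [Field F] {b : ℕ} (v : Fin b → F)
    (hv : Function.Injective v) (r : Fin b → F) :
    (Lagrange.interpolate Finset.univ v r).coeff (b - 1) =
      ∑ i, r i * ∏ j ∈ Finset.univ.erase i, (v i - v j)⁻¹ := by
  rw [Lagrange.interpolate_apply, Polynomial.finset_sum_coeff]
  refine Finset.sum_congr rfl fun i _ => ?_
  rw [coeff_C_mul]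
  congr 1
  have hdeg : (Lagrange.basis Finset.univ v i).natDegree = b - 1 := by
    simpa using Lagrange.natDegree_basis hv.injOn (Finset.mem_univ i)
  rw [← hdeg, ← leadingCoeff, leadingCoeff_lagrange_basis v i]

lemma sum_eval_mul_prod_inv_eq_zero {F : Type*} [Field F] {b : ℕ} (hb : 2 ≤ b)
    (v : Fin b → F) (hv : Function.Injective v) (a : F[X])
    (ha : a.degree ≤ ((b - 2 : ℕ) : WithBot ℕ)) :
    ∑ i, a.eval (v i) * ∏ j ∈ Finset.univ.erase i, (v i - v j)⁻¹ = 0 := by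
  have hlt : a.degree < ((b - 1 : ℕ) : WithBot ℕ) :=
    lt_of_le_of_lt ha (by exact_mod_cast (by omega : b - 2 < b - 1))
  have h1 : a = Lagrange.interpolate Finset.univ v fun i => a.eval (v i) :=
    Lagrange.eq_interpolate hv.injOn (by
      rw [Finset.card_univ, Fintype.card_fin]
      exact lt_of_lt_of_le hlt (by exact_mod_cast (by omega : b - 1 ≤ b)))
  have h2 := coeff_interpolate v hv (fun i => a.eval (v i))
  rw [← h1] at h2
  rw [← h2]
  exact coeff_eq_zero_of_degree_lt hlt

/-- the row rescaling factor -/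
noncomputable def muFun {F : Type*} [Field F] {b : ℕ} (x x' : Fin b → F) (i : Fin b) : F :=
  (∏ j ∈ Finset.univ.erase i, (x i - x j)⁻¹) * ∏ j ∈ Finset.univ.erase i, (x' i - x' j)

lemma muFun_ne_zero {F : Type*} [Field F] {b : ℕ} {x x' : Fin b → F}
    (hx : Function.Injective x) (hx' : Function.Injective x') (i : Fin b) :
    muFun x x' i ≠ 0 := by
  apply mul_ne_zero
  · rw [Finset.prod_ne_zero_iff]
    intro j hj
    exact inv_ne_zero (sub_ne_zero.mpr fun h => (Finset.mem_erase.mp hj).1 (hx h).symm)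
  · rw [Finset.prod_ne_zero_iff]
    intro j hj
    exact sub_ne_zero.mpr fun h => (Finset.mem_erase.mp hj).1 (hx' h).symm

lemma exists_transport {F : Type*} [Field F] {b r : ℕ} (hb : 2 ≤ b)
    (y : Fin b → Fin (r + 1) → F) (x x' : Fin b → F)
    (hx : Function.Injective x) (hx' : Function.Injective x')
    (f : Fin r → Polynomial F) (hf : f ∈ Vspace F b r) :
    ∃ g ∈ Vspace F b r, ∀ p : Fin b × Fin (r + 1),
      evalMap F b r x' y g p = muFun x x' p.1 * evalMap F b r x y f p := by
  set g : Fin r → Polynomial F := fun ℓ =>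
    Lagrange.interpolate Finset.univ x' (fun i => muFun x x' i * (f ℓ).eval (x i)) with hg
  have hdegf : ∀ ℓ, (f ℓ).degree ≤ ((b - 2 : ℕ) : WithBot ℕ) := fun ℓ => by
    have := hf ℓ (Set.mem_univ ℓ)
    rwa [SetLike.mem_coe, Polynomial.mem_degreeLE] at this
  have hcoeff : ∀ ℓ, (g ℓ).coeff (b - 1) = 0 := by
    intro ℓ
    rw [hg, coeff_interpolate x' hx']
    have key : ∀ i : Fin b,
        (muFun x x' i * (f ℓ).eval (x i)) * ∏ j ∈ Finset.univ.erase i, (x' i - x' j)⁻¹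
          = (f ℓ).eval (x i) * ∏ j ∈ Finset.univ.erase i, (x i - x j)⁻¹ := by
      intro i
      have hP : (∏ j ∈ Finset.univ.erase i, (x' i - x' j)) ≠ 0 := by
        rw [Finset.prod_ne_zero_iff]
        intro j hj
        exact sub_ne_zero.mpr fun h => (Finset.mem_erase.mp hj).1 (hx' h).symm
      rw [Finset.prod_inv_distrib, muFun, mul_right_comm, mul_inv_cancel_right₀ hP, mul_comm]
    rw [Finset.sum_congr rfl fun i _ => key i]
    exact sum_eval_mul_prod_inv_eq_zero hb x hx (f ℓ) (hdegf ℓ)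
  refine ⟨g, ?_, ?_⟩
  · intro ℓ _
    rw [SetLike.mem_coe, Polynomial.mem_degreeLE, Polynomial.degree_le_iff_coeff_zero]
    intro m hm
    have hm' : b - 2 < m := by exact_mod_cast hm
    rcases eq_or_lt_of_le (show b - 1 ≤ m by omega) with h | h
    · rw [← h]; exact hcoeff ℓ
    · apply Polynomial.coeff_eq_zero_of_degree_lt
      refine lt_of_lt_of_le (Lagrange.degree_interpolate_lt _ hx'.injOn) ?_
      rw [Finset.card_univ, Fintype.card_fin]
      exact_mod_cast (by omega : b ≤ m)
  · intro p
    show ∑ ℓ : Fin r, (g ℓ).eval (x' p.1) * y p.1 p.2 ^ (ℓ : ℕ)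
        = muFun x x' p.1 * ∑ ℓ : Fin r, (f ℓ).eval (x p.1) * y p.1 p.2 ^ (ℓ : ℕ)
    rw [Finset.mul_sum]
    refine Finset.sum_congr rfl fun ℓ _ => ?_
    rw [hg, Lagrange.eval_interpolate_at_node _ hx'.injOn (Finset.mem_univ p.1)]
    ring

lemma weight_set_subset {F : Type*} [Field F] {b r : ℕ} (hb : 2 ≤ b)
    (y : Fin b → Fin (r + 1) → F) (x x' : Fin b → F)
    (hx : Function.Injective x) (hx' : Function.Injective x') :
    {w : ℕ | ∃ c ∈ (Vspace F b r).map (evalMap F b r x y), c ≠ 0 ∧ hammingWeight c = w} ⊆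
    {w : ℕ | ∃ c ∈ (Vspace F b r).map (evalMap F b r x' y), c ≠ 0 ∧ hammingWeight c = w} := by
  rintro w ⟨c, hc, hc0, rfl⟩
  obtain ⟨f, hf, rfl⟩ := hc
  obtain ⟨g, hg, hgf⟩ := exists_transport hb y x x' hx hx' f hf
  refine ⟨evalMap F b r x' y g, ⟨g, hg, rfl⟩, ?_, ?_⟩
  · intro h0
    apply hc0
    funext p
    have := congrFun h0 p
    rw [hgf p] at this
    simpa [muFun_ne_zero hx hx' p.1] using this
  · unfold hammingWeight
    congr 1
    apply Finset.filter_congr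
    intro p _
    rw [hgf p]
    simp [muFun_ne_zero hx hx' p.1]

/-- the codes obtained from point sets `{(x i, y i j)}` and
`{(x' i, y i j)}`, differing only in the (pairwise distinct) base points, have the same
minimum distance. -/
theorem minDist_independent_of_base_points
    (F : Type*) [Field F] [Fintype F] (b r : ℕ) (hb : 2 ≤ b) (hr : 1 ≤ r)
    (y : Fin b → Fin (r + 1) → F)
    (hy : Function.Injective fun p : Fin b × Fin (r + 1) => y p.1 p.2)
    (x x' : Fin b → F)
    (hx : Function.Injective x) (hx' : Function.Injective x') :
    minDist ((Vspace F b r).map (evalMap F b r x y)) =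
      minDist ((Vspace F b r).map (evalMap F b r x' y)) := by
  unfold minDist
  congr 1
  exact Set.Subset.antisymm (weight_set_subset hb y x x' hx hx')
    (weight_set_subset hb y x' x hx' hx)
end

section
/- Fix i ∈ {1,…,b}. If f ∈ V satisfies f(x_i, y_{i,j}) = 0 for all 1 ≤ j ≤ tr+1 (i.e., f vanishes at every chosen point of the fiber A_i), then the polynomial Σ_{ℓ=0}^{α} x_i^ℓ F_ℓ(y) is the zero polynomial in F_q[y_0,…,y_m]; in particular f(x_i, z) = 0 for every z ∈ F_q^{m+1}. -/
/-- if `f ∈ V` vanishes at every chosen point of the fiber over `x i`,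
then the polynomial `∑ ℓ, x i ^ ℓ • F_ℓ(y)` is the zero polynomial in `F_q[y_0,…,y_m]`;
in particular `f(x i, z) = 0` for every `z ∈ F_q^{m+1}`. -/
theorem fiber_vanishing_general
    (F : Type*) [Field F] [Fintype F]
    (m b t α β : ℕ) (hm : 1 ≤ m) (hb : 1 ≤ b) (ht : 1 ≤ t) (hα : 1 ≤ α) (hβ : 1 ≤ β)
    (hbα : α + 1 ≤ b)
    (x : Fin b → F) (hx : Function.Injective x)
    (y : Fin b → Fin (t * (β + m).choose m + 1) → (Fin (m + 1) → F))
    (hynz : ∀ i j, y i j ≠ 0)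
    (hydist : ∀ (i : Fin b) (j j' : Fin (t * (β + m).choose m + 1)), j ≠ j' →
      ∀ c : F, y i j ≠ c • y i j')
    (hgen : ∀ (i : Fin b) (g : MvPolynomial (Fin (m + 1)) F),
      g.IsHomogeneous β → g ≠ 0 →
      ∀ S : Finset (Fin (t * (β + m).choose m + 1)), S.card = (β + m).choose m →
      ∃ j ∈ S, MvPolynomial.eval (y i j) g ≠ 0)
    (Fc : Fin (α + 1) → MvPolynomial (Fin (m + 1)) F)
    (hFc : ∀ ℓ, (Fc ℓ).IsHomogeneous β)
    (i : Fin b)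
    (hvan : ∀ j, ∑ ℓ : Fin (α + 1), MvPolynomial.eval (y i j) (Fc ℓ) * x i ^ (ℓ : ℕ) = 0) :
    (∑ ℓ : Fin (α + 1), MvPolynomial.C (x i ^ (ℓ : ℕ)) * Fc ℓ) = 0 ∧
      ∀ z : Fin (m + 1) → F,
        ∑ ℓ : Fin (α + 1), MvPolynomial.eval z (Fc ℓ) * x i ^ (ℓ : ℕ) = 0 := by
  set g : MvPolynomial (Fin (m + 1)) F :=
    ∑ ℓ : Fin (α + 1), MvPolynomial.C (x i ^ (ℓ : ℕ)) * Fc ℓ with hg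
  have hgeval : ∀ z : Fin (m + 1) → F,
      MvPolynomial.eval z g = ∑ ℓ : Fin (α + 1), MvPolynomial.eval z (Fc ℓ) * x i ^ (ℓ : ℕ) := by
    intro z
    rw [hg, map_sum]
    refine Finset.sum_congr rfl fun ℓ _ => ?_
    rw [map_mul, MvPolynomial.eval_C, mul_comm]
  have hghom : g.IsHomogeneous β :=
    MvPolynomial.IsHomogeneous.sum _ _ _ fun ℓ _ => (hFc ℓ).C_mul _
  have hg0 : g = 0 := by
    by_contra h0
    have hcard : (β + m).choose m ≤ Fintype.card (Fin (t * (β + m).choose m + 1)) := by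
      simp only [Fintype.card_fin]
      calc (β + m).choose m ≤ t * (β + m).choose m := Nat.le_mul_of_pos_left _ ht
        _ ≤ t * (β + m).choose m + 1 := Nat.le_succ _
    obtain ⟨S, -, hS⟩ := Finset.exists_subset_card_eq
      (le_trans hcard (le_of_eq (Finset.card_univ).symm) : (β + m).choose m ≤ Finset.univ.card)
    obtain ⟨j, -, hj⟩ := hgen i g hghom h0 S hS
    exact hj (by rw [hgeval]; exact hvan j)
  refine ⟨hg0, fun z => ?_⟩
  rw [← hgeval, hg0, map_zero]
end

section
/- (Generalized Fiber Vanishing Lemma) Let f ∈ V be a nonzero polynomial. Then the number of indices i ∈ {1,…,b} such that f(x_i, y_{i,j}) = 0 for all 1 ≤ j ≤ tr+1 is at most α. -/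
open scoped Classical

/-- Generalized Fiber Vanishing Lemma: a nonzero `f ∈ V` vanishes on at
most `α` entire fibers. -/
theorem generalized_fiber_vanishing
    (F : Type*) [Field F] [Fintype F]
    (m b t α β : ℕ) (hm : 1 ≤ m) (hb : 1 ≤ b) (ht : 1 ≤ t) (hα : 1 ≤ α) (hβ : 1 ≤ β)
    (hbα : α + 1 ≤ b)
    (x : Fin b → F) (hx : Function.Injective x)
    (y : Fin b → Fin (t * (β + m).choose m + 1) → (Fin (m + 1) → F))
    (hynz : ∀ i j, y i j ≠ 0)
    (hydist : ∀ (i : Fin b) (j j' : Fin (t * (β + m).choose m + 1)), j ≠ j' →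
      ∀ c : F, y i j ≠ c • y i j')
    (hgen : ∀ (i : Fin b) (g : MvPolynomial (Fin (m + 1)) F),
      g.IsHomogeneous β → g ≠ 0 →
      ∀ S : Finset (Fin (t * (β + m).choose m + 1)), S.card = (β + m).choose m →
      ∃ j ∈ S, MvPolynomial.eval (y i j) g ≠ 0)
    (Fc : Fin (α + 1) → MvPolynomial (Fin (m + 1)) F)
    (hFc : ∀ ℓ, (Fc ℓ).IsHomogeneous β)
    (hne : Fc ≠ 0) :
    (Finset.univ.filter fun i : Fin b =>
        ∀ j, ∑ ℓ : Fin (α + 1), MvPolynomial.eval (y i j) (Fc ℓ) * x i ^ (ℓ : ℕ) = 0).card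
      ≤ α := by
  -- Step 1: each full fiber gives a polynomial identity
  have key : ∀ i ∈ (Finset.univ.filter fun i : Fin b =>
        ∀ j, ∑ ℓ : Fin (α + 1), MvPolynomial.eval (y i j) (Fc ℓ) * x i ^ (ℓ : ℕ) = 0),
      (∑ ℓ : Fin (α + 1), (x i ^ (ℓ : ℕ)) • Fc ℓ) = 0 := by
    intro i hi
    rw [Finset.mem_filter] at hi
    by_contra hg
    set g : MvPolynomial (Fin (m + 1)) F := ∑ ℓ : Fin (α + 1), (x i ^ (ℓ : ℕ)) • Fc ℓ with hgdef
    have hhom : g.IsHomogeneous β := by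
      apply MvPolynomial.IsHomogeneous.sum
      intro ℓ _
      exact (MvPolynomial.mem_homogeneousSubmodule _ _).1
        (Submodule.smul_mem _ _ ((MvPolynomial.mem_homogeneousSubmodule _ _).2 (hFc ℓ)))
    have hrpos : 1 ≤ (β + m).choose m := Nat.choose_pos (Nat.le_add_left m β)
    have hle : (β + m).choose m ≤ t * (β + m).choose m + 1 :=
      le_trans (Nat.le_mul_of_pos_left _ ht) (Nat.le_succ _)
    obtain ⟨S, -, hScard⟩ := Finset.exists_subset_card_eq
      (show (β + m).choose m ≤ (Finset.univ : Finset (Fin (t * (β + m).choose m + 1))).card by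
        simpa using hle)
    obtain ⟨j, -, hj⟩ := hgen i g hhom hg S hScard
    apply hj
    rw [hgdef, map_sum]
    have := hi.2 j
    rw [← this]
    apply Finset.sum_congr rfl
    intro ℓ _
    rw [MvPolynomial.smul_eval, mul_comm]
  -- Step 2: suppose more than α full fibers
  by_contra hcard
  push_neg at hcard
  obtain ⟨s, hs_sub, hs_card⟩ := Finset.exists_subset_card_eq hcard
  let e : Fin (α + 1) → Fin b := fun k => s.orderIsoOfFin hs_card k
  have he : Function.Injective e := fun a b h => by
    simpa using (s.orderIsoOfFin hs_card).injective (Subtype.ext h)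
  have hxe : Function.Injective (fun k => x (e k)) := hx.comp he
  have hzero : ∀ k : Fin (α + 1), (∑ ℓ : Fin (α + 1), (x (e k) ^ (ℓ : ℕ)) • Fc ℓ) = 0 := by
    intro k
    exact key (e k) (hs_sub ((s.orderIsoOfFin hs_card k).2))
  apply hne
  funext ℓ
  ext d
  have : (fun ℓ : Fin (α + 1) => MvPolynomial.coeff d (Fc ℓ)) = 0 := by
    apply Matrix.eq_zero_of_forall_index_sum_mul_pow_eq_zero hxe
    intro k
    have := hzero k
    have h2 := congrArg (MvPolynomial.coeff d) this
    rw [MvPolynomial.coeff_sum] at h2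
    simpa [MvPolynomial.coeff_smul, mul_comm] using h2
  simpa using congrFun this ℓ
end

section
/- The evaluation map ev_P : V → F_q^n is injective. Consequently, the code C = im(ev_P) has F_q-dimension exactly (α+1)·binom(β+m, m) = (α+1)·r. -/
open MvPolynomial

noncomputable def symDegEquiv (m β : ℕ) :
    Sym (Fin (m + 1)) β ≃ {d : Fin (m + 1) →₀ ℕ | d.degree = β} where
  toFun s := ⟨Multiset.toFinsupp (s : Multiset (Fin (m + 1))),
    (Multiset.toFinsupp_sum_eq (s : Multiset (Fin (m + 1)))).trans s.2⟩
  invFun d := ⟨Multiset.toFinsupp.symm d.1, by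
    have h1 : Finsupp.degree (Multiset.toFinsupp (Multiset.toFinsupp.symm d.1)) =
        Multiset.card (Multiset.toFinsupp.symm d.1) :=
      Multiset.toFinsupp_sum_eq _
    rw [Multiset.toFinsupp.apply_symm_apply] at h1
    rw [← h1]; exact d.2⟩
  left_inv s := by ext1; simp
  right_inv d := by ext1; simp

lemma finrank_homog (F : Type*) [Field F] (m β : ℕ) :
    Module.finrank F (MvPolynomial.homogeneousSubmodule (Fin (m + 1)) F β) =
      (β + m).choose m := by
  classical
  rw [MvPolynomial.homogeneousSubmodule_eq_finsupp_supported]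
  haveI : Fintype ↥{d : Fin (m + 1) →₀ ℕ | d.degree = β} :=
    Fintype.ofEquiv _ (symDegEquiv m β)
  have hb : Module.finrank F
      (MvPolynomial.restrictSupport F {d : Fin (m + 1) →₀ ℕ | d.degree = β}) =
      Fintype.card ↥{d : Fin (m + 1) →₀ ℕ | d.degree = β} :=
    Module.finrank_eq_card_basis (MvPolynomial.basisRestrictSupport F _)
  rw [show (AddMonoidAlgebra.supported F F {d : Fin (m+1) →₀ ℕ | d.degree = β} :
      Submodule F (MvPolynomial (Fin (m+1)) F)) =
      MvPolynomial.restrictSupport F {d : Fin (m + 1) →₀ ℕ | d.degree = β} from rfl, hb,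
    ← Fintype.card_congr (symDegEquiv m β), Sym.card_sym_fin_eq_multichoose,
    Nat.multichoose_eq]
  rw [show m + 1 + β - 1 = β + m by omega, ← Nat.choose_symm (Nat.le_add_left m β)]
  congr 1
  omega

lemma homog_finite (F : Type*) [Field F] (m β : ℕ) :
    Module.Finite F (MvPolynomial.homogeneousSubmodule (Fin (m + 1)) F β) := by
  rw [MvPolynomial.homogeneousSubmodule_eq_finsupp_supported]
  haveI : Finite ↥{d : Fin (m + 1) →₀ ℕ | d.degree = β} :=
    Finite.of_equiv _ (symDegEquiv m β)
  exact Module.Finite.of_basis (MvPolynomial.basisRestrictSupport F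
    {d : Fin (m + 1) →₀ ℕ | d.degree = β})

/-- A pi submodule over `Set.univ` is equivalent to the pi of the submodules. -/
def myPiEquiv {R : Type*} [Semiring R] {ι : Type*} {φ : ι → Type*}
    [∀ i, AddCommMonoid (φ i)] [∀ i, Module R (φ i)] (p : ∀ i, Submodule R (φ i)) :
    ↥(Submodule.pi Set.univ p) ≃ₗ[R] ∀ i, ↥(p i) where
  toFun v := fun i => ⟨v.1 i, v.2 i (Set.mem_univ i)⟩
  map_add' _ _ := rfl
  map_smul' _ _ := rfl
  invFun w := ⟨fun i => (w i).1, fun i _ => (w i).2⟩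
  left_inv _ := rfl
  right_inv _ := rfl

-- (paste of evalMapHD / VspaceHD / theorem goes in proof.lean; here test the theorem body)
/-- The evaluation map sending a tuple `Fc : Fin (α+1) → F[y_0,…,y_m]` (representing the
polynomial `f(x, y) = ∑ ℓ, F_ℓ(y) x ^ ℓ`) to its values at the points `(x i, y i j)`. -/
noncomputable def evalMapHD (F : Type*) [Field F] (m b t α β : ℕ) (x : Fin b → F)
    (y : Fin b → Fin (t * (β + m).choose m + 1) → (Fin (m + 1) → F)) :
    (Fin (α + 1) → MvPolynomial (Fin (m + 1)) F) →ₗ[F]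
      (Fin b × Fin (t * (β + m).choose m + 1) → F) where
  toFun Fc := fun p =>
    ∑ ℓ : Fin (α + 1), MvPolynomial.eval (y p.1 p.2) (Fc ℓ) * x p.1 ^ (ℓ : ℕ)
  map_add' u v := by
    funext p
    simp [Pi.add_apply, map_add, add_mul, Finset.sum_add_distrib]
  map_smul' c u := by
    funext p
    simp [Pi.smul_apply, MvPolynomial.smul_eq_C_mul, map_mul, MvPolynomial.eval_C,
      Finset.mul_sum, mul_assoc]

/-- The space `V` of polynomials `f(x, y) = ∑_{ℓ=0}^{α} F_ℓ(y) x^ℓ` with each `F_ℓ`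
homogeneous of degree `β` (or zero), represented by the tuple `(F_0, …, F_α)`. -/
noncomputable def VspaceHD (F : Type*) [Field F] (m α β : ℕ) :
    Submodule F (Fin (α + 1) → MvPolynomial (Fin (m + 1)) F) :=
  Submodule.pi Set.univ fun _ : Fin (α + 1) =>
    MvPolynomial.homogeneousSubmodule (Fin (m + 1)) F β

/-- the evaluation map `ev_P : V → F_q^n` is injective, and the code
`C = im ev_P` has dimension `(α+1) · binom(β+m, m)`. -/
theorem evalMapHD_injOn_and_finrank_range
    (F : Type*) [Field F] [Fintype F]
    (m b t α β : ℕ) (hm : 1 ≤ m) (hb : 1 ≤ b) (ht : 1 ≤ t) (hα : 1 ≤ α) (hβ : 1 ≤ β)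
    (hbα : α + 1 ≤ b)
    (x : Fin b → F) (hx : Function.Injective x)
    (y : Fin b → Fin (t * (β + m).choose m + 1) → (Fin (m + 1) → F))
    (hynz : ∀ i j, y i j ≠ 0)
    (hydist : ∀ (i : Fin b) (j j' : Fin (t * (β + m).choose m + 1)), j ≠ j' →
      ∀ c : F, y i j ≠ c • y i j')
    (hgen : ∀ (i : Fin b) (g : MvPolynomial (Fin (m + 1)) F),
      g.IsHomogeneous β → g ≠ 0 →
      ∀ S : Finset (Fin (t * (β + m).choose m + 1)), S.card = (β + m).choose m →
      ∃ j ∈ S, MvPolynomial.eval (y i j) g ≠ 0) :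
    Set.InjOn (evalMapHD F m b t α β x y)
        (VspaceHD F m α β : Set (Fin (α + 1) → MvPolynomial (Fin (m + 1)) F)) ∧
      Module.finrank F ((VspaceHD F m α β).map (evalMapHD F m b t α β x y)) =
        (α + 1) * (β + m).choose m := by
  classical
  have key : ∀ Fc ∈ VspaceHD F m α β, evalMapHD F m b t α β x y Fc = 0 → Fc = 0 := by
    intro Fc hFc h0
    -- Step 1: for each i the polynomial g_i = ∑ ℓ, x_i^ℓ • Fc ℓ vanishes.
    have hg : ∀ i : Fin b, ∑ ℓ : Fin (α + 1), x i ^ (ℓ : ℕ) • Fc ℓ = 0 := by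
      intro i
      by_contra hne
      have hhom : (∑ ℓ : Fin (α + 1), x i ^ (ℓ : ℕ) • Fc ℓ).IsHomogeneous β := by
        have : (∑ ℓ : Fin (α + 1), x i ^ (ℓ : ℕ) • Fc ℓ) ∈
            MvPolynomial.homogeneousSubmodule (Fin (m + 1)) F β :=
          Submodule.sum_mem _ fun ℓ _ => Submodule.smul_mem _ _ (hFc ℓ (Set.mem_univ ℓ))
        exact this
      have hrle : (β + m).choose m ≤
          (Finset.univ : Finset (Fin (t * (β + m).choose m + 1))).card := by
        have h1 : (β + m).choose m ≤ t * (β + m).choose m :=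
          Nat.le_mul_of_pos_left _ ht
        simp only [Finset.card_univ, Fintype.card_fin]
        omega
      obtain ⟨S, -, hScard⟩ := Finset.exists_subset_card_eq hrle
      obtain ⟨j, -, hj⟩ := hgen i _ hhom hne S hScard
      apply hj
      have h1 := congrFun h0 (i, j)
      simp only [evalMapHD, LinearMap.coe_mk, AddHom.coe_mk, Pi.zero_apply] at h1
      rw [map_sum]
      calc ∑ ℓ : Fin (α + 1), MvPolynomial.eval (y i j) (x i ^ (ℓ : ℕ) • Fc ℓ)
          = ∑ ℓ : Fin (α + 1), MvPolynomial.eval (y i j) (Fc ℓ) * x i ^ (ℓ : ℕ) := by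
            refine Finset.sum_congr rfl fun ℓ _ => ?_
            rw [MvPolynomial.smul_eq_C_mul, map_mul, MvPolynomial.eval_C, mul_comm]
        _ = 0 := h1
    -- Step 2: Vandermonde-style argument over the polynomial ring.
    funext k
    have hQ : (∑ ℓ : Fin (α + 1),
        Polynomial.C (Fc ℓ) * Polynomial.X ^ (ℓ : ℕ)) = 0 := by
      apply Polynomial.eq_zero_of_natDegree_lt_card_of_eval_eq_zero _
        (f := fun k : Fin (α + 1) =>
          (MvPolynomial.C (x (Fin.castLE hbα k)) : MvPolynomial (Fin (m + 1)) F))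
      · exact (MvPolynomial.C_injective _ F).comp (hx.comp (Fin.castLE_injective hbα))
      · intro k
        rw [Polynomial.eval_finset_sum]
        have h2 := hg (Fin.castLE hbα k)
        calc ∑ ℓ : Fin (α + 1),
            Polynomial.eval (MvPolynomial.C (x (Fin.castLE hbα k))) (Polynomial.C (Fc ℓ) * Polynomial.X ^ (ℓ : ℕ))
            = ∑ ℓ : Fin (α + 1), x (Fin.castLE hbα k) ^ (ℓ : ℕ) • Fc ℓ := by
              refine Finset.sum_congr rfl fun ℓ _ => ?_
              rw [Polynomial.eval_mul, Polynomial.eval_C, Polynomial.eval_pow, Polynomial.eval_X,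
                ← MvPolynomial.C_pow, MvPolynomial.smul_eq_C_mul, mul_comm]
          _ = 0 := h2
      · calc (∑ ℓ : Fin (α + 1), Polynomial.C (Fc ℓ) * Polynomial.X ^ (ℓ : ℕ)).natDegree
            ≤ α := Polynomial.natDegree_sum_le_of_forall_le _ _ fun ℓ _ =>
              (Polynomial.natDegree_C_mul_X_pow_le (Fc ℓ) (ℓ : ℕ)).trans
                (Nat.lt_succ_iff.mp ℓ.2)
          _ < Fintype.card (Fin (α + 1)) := by simp
    have h3 := congrArg (fun p => Polynomial.coeff p (k : ℕ)) hQ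
    simp only [Polynomial.finset_sum_coeff, Polynomial.coeff_C_mul, Polynomial.coeff_X_pow,
      Polynomial.coeff_zero, mul_ite, mul_one, mul_zero] at h3
    rw [Finset.sum_congr rfl (g := fun ℓ : Fin (α + 1) => if k = ℓ then Fc ℓ else 0)
      (fun ℓ _ => by simp [Fin.ext_iff, eq_comm]), Finset.sum_ite_eq] at h3
    simpa using h3
  constructor
  · intro a ha c hc hac
    have h4 : evalMapHD F m b t α β x y (a - c) = 0 := by
      rw [map_sub, hac, sub_self]
    have := key (a - c) (Submodule.sub_mem _ ha hc) h4
    exact sub_eq_zero.mp this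
  · haveI hfin : Module.Finite F (MvPolynomial.homogeneousSubmodule (Fin (m + 1)) F β) :=
      homog_finite F m β
    haveI hVfin : Module.Finite F ↥(VspaceHD F m α β) :=
      Module.Finite.equiv (myPiEquiv _).symm
    set f := evalMapHD F m b t α β x y with hf
    have hinj : Function.Injective (f ∘ₗ (VspaceHD F m α β).subtype) := by
      rw [← LinearMap.ker_eq_bot, LinearMap.ker_eq_bot']
      intro v hv
      exact Subtype.ext (key v.1 v.2 hv)
    have hrange : LinearMap.range (f ∘ₗ (VspaceHD F m α β).subtype) =
        (VspaceHD F m α β).map f := by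
      rw [LinearMap.range_comp, Submodule.range_subtype]
    have h5 := LinearMap.finrank_range_of_inj hinj
    rw [hrange] at h5
    rw [h5, VspaceHD, LinearEquiv.finrank_eq (myPiEquiv _), Module.finrank_pi_fintype]
    simp [finrank_homog F m β]
end

section
/- For every i ∈ {1,…,b} and j ∈ {1,…,tr+1}, there exist t pairwise disjoint r-element subsets R_1, …, R_t of A_i not containing y_{i,j} such that for each ℓ ∈ {1,…,t}: any two polynomials f, g ∈ V with f(x_i, z) = g(x_i, z) for all z ∈ R_ℓ satisfy f(x_i, y_{i,j}) = g(x_i, y_{i,j}). In other words, the code C is locally recoverable with locality r and availability t: each codeword symbol can be recovered from each of t disjoint recovery sets of r other symbols in its batch. -/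
/-- the code `C` is locally recoverable with locality `r = binom(β+m, m)`
and availability `t`: for every point `(x i, y i j)` there are `t` pairwise disjoint
`r`-element recovery sets inside the batch `A_i`, avoiding `j`, each of which uniquely
determines the symbol at `(x i, y i j)`. -/
theorem local_recovery_with_availability
    (F : Type*) [Field F] [Fintype F]
    (m b t α β : ℕ) (hm : 1 ≤ m) (hb : 1 ≤ b) (ht : 1 ≤ t) (hα : 1 ≤ α) (hβ : 1 ≤ β)
    (hbα : α + 1 ≤ b)
    (x : Fin b → F) (hx : Function.Injective x)
    (y : Fin b → Fin (t * (β + m).choose m + 1) → (Fin (m + 1) → F))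
    (hynz : ∀ i j, y i j ≠ 0)
    (hydist : ∀ (i : Fin b) (j j' : Fin (t * (β + m).choose m + 1)), j ≠ j' →
      ∀ c : F, y i j ≠ c • y i j')
    (hgen : ∀ (i : Fin b) (g : MvPolynomial (Fin (m + 1)) F),
      g.IsHomogeneous β → g ≠ 0 →
      ∀ S : Finset (Fin (t * (β + m).choose m + 1)), S.card = (β + m).choose m →
      ∃ j ∈ S, MvPolynomial.eval (y i j) g ≠ 0)
    (i : Fin b) (j : Fin (t * (β + m).choose m + 1)) :
    ∃ R : Fin t → Finset (Fin (t * (β + m).choose m + 1)),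
      (∀ ℓ, (R ℓ).card = (β + m).choose m) ∧
      (∀ ℓ, j ∉ R ℓ) ∧
      (∀ ℓ ℓ', ℓ ≠ ℓ' → Disjoint (R ℓ) (R ℓ')) ∧
      (∀ ℓ, ∀ Fc Gc : Fin (α + 1) → MvPolynomial (Fin (m + 1)) F,
        (∀ u, (Fc u).IsHomogeneous β) → (∀ u, (Gc u).IsHomogeneous β) →
        (∀ j' ∈ R ℓ,
          ∑ u : Fin (α + 1), MvPolynomial.eval (y i j') (Fc u) * x i ^ (u : ℕ) =
          ∑ u : Fin (α + 1), MvPolynomial.eval (y i j') (Gc u) * x i ^ (u : ℕ)) →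
        ∑ u : Fin (α + 1), MvPolynomial.eval (y i j) (Fc u) * x i ^ (u : ℕ) =
        ∑ u : Fin (α + 1), MvPolynomial.eval (y i j) (Gc u) * x i ^ (u : ℕ)) := by

  classical
  have hr1 : 1 ≤ ((β + m).choose m) := Nat.choose_pos (Nat.le_add_left m β)
  have hT : (Finset.univ.erase j).card = t * ((β + m).choose m) := by
    rw [Finset.card_erase_of_mem (Finset.mem_univ j), Finset.card_univ, Fintype.card_fin]
    simp
  let e := (Finset.univ.erase j).orderIsoOfFin hT
  have hlt : ∀ (ℓ : Fin t) (k : Fin ((β + m).choose m)), (ℓ : ℕ) * ((β + m).choose m) + (k : ℕ) < t * ((β + m).choose m) := by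
    intro ℓ k
    have h1 : (ℓ : ℕ) * ((β + m).choose m) + (k : ℕ) < ((ℓ : ℕ) + 1) * ((β + m).choose m) := by
      have := k.2; nlinarith
    have h2 : ((ℓ : ℕ) + 1) * ((β + m).choose m) ≤ t * ((β + m).choose m) := Nat.mul_le_mul_right ((β + m).choose m) ℓ.2
    omega
  let R : Fin t → Finset (Fin (t * ((β + m).choose m) + 1)) := fun ℓ =>
    Finset.image (fun k : Fin ((β + m).choose m) => ((e ⟨(ℓ : ℕ) * ((β + m).choose m) + (k : ℕ), hlt ℓ k⟩ : _) :
      Fin (t * ((β + m).choose m) + 1))) Finset.univ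
  have hinj : ∀ ℓ : Fin t, Function.Injective
      (fun k : Fin ((β + m).choose m) => ((e ⟨(ℓ : ℕ) * ((β + m).choose m) + (k : ℕ), hlt ℓ k⟩ : _) : Fin (t * ((β + m).choose m) + 1))) := by
    intro ℓ k k' h
    have h2 : (⟨(ℓ : ℕ) * ((β + m).choose m) + (k : ℕ), hlt ℓ k⟩ : Fin (t * ((β + m).choose m))) =
        ⟨(ℓ : ℕ) * ((β + m).choose m) + (k' : ℕ), hlt ℓ k'⟩ := e.injective (Subtype.ext h)
    have h3 : (ℓ : ℕ) * ((β + m).choose m) + (k : ℕ) = (ℓ : ℕ) * ((β + m).choose m) + (k' : ℕ) := congrArg Fin.val h2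
    exact Fin.ext (by omega)
  have hmem : ∀ (ℓ : Fin t) (z : Fin (t * ((β + m).choose m) + 1)), z ∈ R ℓ →
      ∃ k : Fin ((β + m).choose m), ((e ⟨(ℓ : ℕ) * ((β + m).choose m) + (k : ℕ), hlt ℓ k⟩ : _) : Fin (t * ((β + m).choose m) + 1)) = z := by
    intro ℓ z hz
    obtain ⟨k, _, hk⟩ := Finset.mem_image.mp hz
    exact ⟨k, hk⟩
  refine ⟨R, ?_, ?_, ?_, ?_⟩
  · intro ℓ
    rw [Finset.card_image_of_injective _ (hinj ℓ), Finset.card_univ, Fintype.card_fin]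
  · intro ℓ hjm
    obtain ⟨k, hk⟩ := hmem ℓ j hjm
    have : ((e ⟨(ℓ : ℕ) * ((β + m).choose m) + (k : ℕ), hlt ℓ k⟩ : _) : Fin (t * ((β + m).choose m) + 1)) ∈
        Finset.univ.erase j := (e _).2
    rw [hk] at this
    exact (Finset.ne_of_mem_erase this) rfl
  · intro ℓ ℓ' hne
    rw [Finset.disjoint_left]
    intro z hz hz'
    obtain ⟨k, hk⟩ := hmem ℓ z hz
    obtain ⟨k', hk'⟩ := hmem ℓ' z hz'
    have h2 : (⟨(ℓ : ℕ) * ((β + m).choose m) + (k : ℕ), hlt ℓ k⟩ : Fin (t * ((β + m).choose m))) =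
        ⟨(ℓ' : ℕ) * ((β + m).choose m) + (k' : ℕ), hlt ℓ' k'⟩ :=
      e.injective (Subtype.ext (hk.trans hk'.symm))
    have h3 : (ℓ : ℕ) * ((β + m).choose m) + (k : ℕ) = (ℓ' : ℕ) * ((β + m).choose m) + (k' : ℕ) := congrArg Fin.val h2
    have hkr := k.2
    have hkr' := k'.2
    have : (ℓ : ℕ) = (ℓ' : ℕ) := by
      rcases Nat.lt_trichotomy (ℓ : ℕ) (ℓ' : ℕ) with h | h | h
      · exfalso; nlinarith
      · exact h
      · exfalso; nlinarith
    exact hne (Fin.ext this)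
  · intro ℓ Fc Gc hF hG hagree
    set g : MvPolynomial (Fin (m + 1)) F :=
      ∑ u : Fin (α + 1), x i ^ (u : ℕ) • (Fc u - Gc u) with hgdef
    have hghom : g.IsHomogeneous β := by
      rw [← MvPolynomial.mem_homogeneousSubmodule]
      apply Submodule.sum_mem
      intro u _
      apply Submodule.smul_mem
      rw [MvPolynomial.mem_homogeneousSubmodule]
      exact (hF u).sub (hG u)
    have heval : ∀ v : Fin (m + 1) → F, MvPolynomial.eval v g =
        (∑ u : Fin (α + 1), MvPolynomial.eval v (Fc u) * x i ^ (u : ℕ)) -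
        (∑ u : Fin (α + 1), MvPolynomial.eval v (Gc u) * x i ^ (u : ℕ)) := by
      intro v
      rw [hgdef, map_sum, ← Finset.sum_sub_distrib]
      apply Finset.sum_congr rfl
      intro u _
      rw [MvPolynomial.smul_eval, map_sub]
      ring
    have hzero : ∀ j' ∈ R ℓ, MvPolynomial.eval (y i j') g = 0 := by
      intro j' hj'
      rw [heval, sub_eq_zero]
      exact hagree j' hj'
    have hg0 : g = 0 := by
      by_contra hne
      obtain ⟨j', hj', hne'⟩ := hgen i g hghom hne (R ℓ) (by
        rw [Finset.card_image_of_injective _ (hinj ℓ), Finset.card_univ, Fintype.card_fin])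
      exact hne' (hzero j' hj')
    have := heval (y i j)
    rw [hg0, map_zero] at this
    exact (sub_eq_zero.mp this.symm)
end

section
/- Every nonzero codeword of C has Hamming weight at least (b−α)·((t−1)r + 2). Consequently, the minimum distance of C satisfies d ≥ (b−α)·((t−1)r + 2). -/
open scoped Classical

/-- every nonzero codeword of `C` has Hamming weight at least
`(b-α)((t-1)r + 2)`, where `r = binom(β+m, m)`; hence `d ≥ (b-α)((t-1)r + 2)`. -/
theorem minimum_distance_lower_bound
    (F : Type*) [Field F] [Fintype F]
    (m b t α β : ℕ) (hm : 1 ≤ m) (hb : 1 ≤ b) (ht : 1 ≤ t) (hα : 1 ≤ α) (hβ : 1 ≤ β)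
    (hbα : α + 1 ≤ b)
    (x : Fin b → F) (hx : Function.Injective x)
    (y : Fin b → Fin (t * (β + m).choose m + 1) → (Fin (m + 1) → F))
    (hynz : ∀ i j, y i j ≠ 0)
    (hydist : ∀ (i : Fin b) (j j' : Fin (t * (β + m).choose m + 1)), j ≠ j' →
      ∀ c : F, y i j ≠ c • y i j')
    (hgen : ∀ (i : Fin b) (g : MvPolynomial (Fin (m + 1)) F),
      g.IsHomogeneous β → g ≠ 0 →
      ∀ S : Finset (Fin (t * (β + m).choose m + 1)), S.card = (β + m).choose m →
      ∃ j ∈ S, MvPolynomial.eval (y i j) g ≠ 0)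
    (Fc : Fin (α + 1) → MvPolynomial (Fin (m + 1)) F)
    (hFc : ∀ ℓ, (Fc ℓ).IsHomogeneous β)
    (hne : (fun p : Fin b × Fin (t * (β + m).choose m + 1) =>
      ∑ ℓ : Fin (α + 1), MvPolynomial.eval (y p.1 p.2) (Fc ℓ) * x p.1 ^ (ℓ : ℕ)) ≠ 0) :
    (b - α) * ((t - 1) * (β + m).choose m + 2) ≤
      (Finset.univ.filter fun p : Fin b × Fin (t * (β + m).choose m + 1) =>
        (∑ ℓ : Fin (α + 1), MvPolynomial.eval (y p.1 p.2) (Fc ℓ) * x p.1 ^ (ℓ : ℕ)) ≠ 0).card := by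
  classical
  have hr1 : 1 ≤ (β + m).choose m := Nat.choose_pos (Nat.le_add_left m β)
  -- the per-block polynomial
  set g : Fin b → MvPolynomial (Fin (m + 1)) F :=
    fun i => ∑ ℓ : Fin (α + 1), MvPolynomial.C (x i ^ (ℓ : ℕ)) * Fc ℓ with hgdef
  have hgeval : ∀ (i : Fin b) (j : Fin (t * (β + m).choose m + 1)),
      MvPolynomial.eval (y i j) (g i) =
      ∑ ℓ : Fin (α + 1), MvPolynomial.eval (y i j) (Fc ℓ) * x i ^ (ℓ : ℕ) := by
    intro i j
    simp [hgdef, mul_comm]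
  have hghom : ∀ i, (g i).IsHomogeneous β := fun i =>
    MvPolynomial.IsHomogeneous.sum _ _ _ (fun ℓ _ => (hFc ℓ).C_mul _)
  -- the "bad" set of blocks where g i = 0 is small
  have hbad : (Finset.univ.filter fun i => g i = 0).card ≤ α := by
    by_contra hcon
    push_neg at hcon
    set Q : Polynomial (MvPolynomial (Fin (m + 1)) F) :=
      ∑ ℓ : Fin (α + 1), Polynomial.C (Fc ℓ) * Polynomial.X ^ (ℓ : ℕ) with hQdef
    have hQdeg : Q.natDegree ≤ α := by
      refine (Polynomial.natDegree_sum_le _ _).trans ?_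
      simp only [Finset.fold_max_le]
      refine ⟨Nat.zero_le _, fun ℓ _ => ?_⟩
      exact (Polynomial.natDegree_C_mul_le _ _).trans
        (le_of_eq_of_le (Polynomial.natDegree_X_pow _) (Nat.lt_succ_iff.mp ℓ.isLt))
    have hCinj : Function.Injective fun i : Fin b => MvPolynomial.C (σ := Fin (m + 1)) (x i) :=
      fun a b h => hx (MvPolynomial.C_injective _ _ h)
    have hQ0 : Q = 0 := by
      refine Polynomial.eq_zero_of_natDegree_lt_card_of_eval_eq_zero' Q
        ((Finset.univ.filter fun i => g i = 0).image fun i => MvPolynomial.C (x i)) ?_ ?_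
      · intro c hc
        simp only [Finset.mem_image, Finset.mem_filter, Finset.mem_univ, true_and] at hc
        obtain ⟨i, hgi, rfl⟩ := hc
        have heq : Q.eval (MvPolynomial.C (x i)) = g i := by
          rw [hQdef, Polynomial.eval_finset_sum, hgdef]
          simp only [Polynomial.eval_mul, Polynomial.eval_C, Polynomial.eval_pow,
            Polynomial.eval_X, MvPolynomial.C_pow]
          exact Finset.sum_congr rfl fun ℓ _ => mul_comm _ _
        rw [heq, hgi]
      · rw [Finset.card_image_of_injective _ hCinj]
        exact lt_of_le_of_lt hQdeg hcon
    have hFc0 : ∀ ℓ, Fc ℓ = 0 := by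
      intro ℓ
      have h := congrArg (fun p => Polynomial.coeff p (ℓ : ℕ)) hQ0
      simpa [hQdef, Polynomial.coeff_X_pow, Polynomial.finset_sum_coeff,
        Fin.val_eq_val, Finset.sum_ite_eq] using h
    apply hne
    funext p
    simp [hFc0]
  -- per-block weight count
  have hcount : ∀ i : Fin b, g i ≠ 0 →
      (t - 1) * (β + m).choose m + 2 ≤
      (Finset.univ.filter fun j : Fin (t * (β + m).choose m + 1) =>
        MvPolynomial.eval (y i j) (g i) ≠ 0).card := by
    intro i hgi
    set Z := Finset.univ.filter fun j : Fin (t * (β + m).choose m + 1) =>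
      MvPolynomial.eval (y i j) (g i) = 0 with hZ
    have hZcard : Z.card < (β + m).choose m := by
      by_contra hcon
      push_neg at hcon
      obtain ⟨S, hSZ, hScard⟩ := Finset.exists_subset_card_eq hcon
      obtain ⟨j, hjS, hj⟩ := hgen i (g i) (hghom i) hgi S hScard
      exact hj ((Finset.mem_filter.mp (hSZ hjS)).2)
    have hsplit : (Finset.univ.filter fun j : Fin (t * (β + m).choose m + 1) =>
        MvPolynomial.eval (y i j) (g i) ≠ 0).card + Z.card = t * (β + m).choose m + 1 := by
      rw [hZ]
      simpa using Finset.card_filter_add_card_filter_not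
        (s := (Finset.univ : Finset (Fin (t * (β + m).choose m + 1))))
        (p := fun j => MvPolynomial.eval (y i j) (g i) ≠ 0)
    have htr : (β + m).choose m ≤ t * (β + m).choose m :=
      Nat.le_mul_of_pos_left _ ht
    have hmul : (t - 1) * (β + m).choose m = t * (β + m).choose m - (β + m).choose m :=
      Nat.sub_one_mul t _
    omega
  -- good set
  set good := Finset.univ.filter fun i => g i ≠ 0 with hgood
  have hgoodcard : b - α ≤ good.card := by
    have h1 := Finset.card_filter_add_card_filter_not
      (s := (Finset.univ : Finset (Fin b))) (p := fun i => g i = 0)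
    simp only [Finset.card_univ, Fintype.card_fin, ne_eq] at h1
    have h2 : good = Finset.univ.filter fun i => ¬ g i = 0 := rfl
    rw [h2]
    omega
  -- fiberwise counting
  rw [Finset.card_eq_sum_card_fiberwise
    (s := Finset.univ.filter fun p : Fin b × Fin (t * (β + m).choose m + 1) =>
      (∑ ℓ : Fin (α + 1), MvPolynomial.eval (y p.1 p.2) (Fc ℓ) * x p.1 ^ (ℓ : ℕ)) ≠ 0)
    (t := (Finset.univ : Finset (Fin b))) (f := Prod.fst)
    (fun p _ => Finset.mem_univ _)]
  have hfib_le : ∀ i : Fin b,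
      (Finset.univ.filter fun j : Fin (t * (β + m).choose m + 1) =>
        MvPolynomial.eval (y i j) (g i) ≠ 0).card ≤
      ((Finset.univ.filter fun p : Fin b × Fin (t * (β + m).choose m + 1) =>
        (∑ ℓ : Fin (α + 1), MvPolynomial.eval (y p.1 p.2) (Fc ℓ) * x p.1 ^ (ℓ : ℕ)) ≠ 0).filter
        fun p => p.1 = i).card := by
    intro i
    apply Finset.card_le_card_of_injOn (fun j => (i, j))
    · intro j hj
      simp only [Finset.mem_coe, Finset.mem_filter, Finset.mem_univ, true_and] at hj
      refine Finset.mem_coe.mpr (Finset.mem_filter.mpr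
        ⟨Finset.mem_filter.mpr ⟨Finset.mem_univ _, ?_⟩, rfl⟩)
      rw [← hgeval]; exact hj
    · intro a _ a' _ h
      exact ((Prod.mk.injEq _ _ _ _).mp h).2
  calc (b - α) * ((t - 1) * (β + m).choose m + 2)
      ≤ good.card * ((t - 1) * (β + m).choose m + 2) := Nat.mul_le_mul_right _ hgoodcard
    _ = ∑ _i ∈ good, ((t - 1) * (β + m).choose m + 2) := by
        rw [Finset.sum_const, smul_eq_mul]
    _ ≤ ∑ i ∈ good, ((Finset.univ.filter fun p : Fin b × Fin (t * (β + m).choose m + 1) =>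
        (∑ ℓ : Fin (α + 1), MvPolynomial.eval (y p.1 p.2) (Fc ℓ) * x p.1 ^ (ℓ : ℕ)) ≠ 0).filter
        fun p => p.1 = i).card := by
        refine Finset.sum_le_sum fun i hi => ?_
        exact (hcount i (Finset.mem_filter.mp hi).2).trans (hfib_le i)
    _ ≤ ∑ i : Fin b, ((Finset.univ.filter fun p : Fin b × Fin (t * (β + m).choose m + 1) =>
        (∑ ℓ : Fin (α + 1), MvPolynomial.eval (y p.1 p.2) (Fc ℓ) * x p.1 ^ (ℓ : ℕ)) ≠ 0).filter
        fun p => p.1 = i).card :=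
        Finset.sum_le_sum_of_subset (Finset.filter_subset _ _)
end
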